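/- arXiv:2411.04601 — 2 statements merged into one kernel-verified Lean document; each statement's English description precedes it below -/
import Mathlib

section
/- Let G be a graph containing two distinct edges e and h such that the closed edge neighborhood EN[e] is a proper subset of EN[h]. Then M(G) is homotopy equivalent to the wedge of M(G \ {h}) and the suspension of M(G \ EN[h]). -/
noncomputable section

/-- The geometric realization of a set of faces `K` (an abstract simplicial complex):
the space of convex-combination weight functions supported on a face. -/
def realization {α : Type*} (K : Set (Finset α)) : Type _ :=
  {f : α → ℝ // (∀ a, 0 ≤ f a) ∧ ∃ s ∈ K, Function.support f ⊆ ↑s ∧ ∑ a ∈ s, f a = 1}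

instance realization.topologicalSpace {α : Type*} (K : Set (Finset α)) :
    TopologicalSpace (realization K) :=
  instTopologicalSpaceSubtype

/-- The unreduced suspension of a space: the cylinder `X × [0,1]` together with two cone
points, gluing `X × {0}` to one and `X × {1}` to the other.  (With this definition, the
suspension of the empty space is the two-point space `S⁰`.) -/
def Susp (X : Type*) [TopologicalSpace X] : Type _ :=
  Quot (fun (p q : (X × Set.Icc (0:ℝ) 1) ⊕ Bool) =>
    match p, q with
    | Sum.inl p, Sum.inr b => ((p.2 : ℝ) = 0 ∧ b = false) ∨ ((p.2 : ℝ) = 1 ∧ b = true)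
    | _, _ => False)

instance Susp.topologicalSpace (X : Type*) [TopologicalSpace X] :
    TopologicalSpace (Susp X) := by
  unfold Susp; infer_instance

/-- The wedge sum of two pointed spaces. -/
def Wedge (X : Type*) (Y : Type*) [TopologicalSpace X] [TopologicalSpace Y]
    (x : X) (y : Y) : Type _ :=
  Quot (fun (a b : X ⊕ Y) => a = Sum.inl x ∧ b = Sum.inr y)

instance Wedge.topologicalSpace (X : Type*) (Y : Type*) [TopologicalSpace X]
    [TopologicalSpace Y] (x : X) (y : Y) : TopologicalSpace (Wedge X Y x y) := by
  unfold Wedge; infer_instance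

/-- The `n`-sphere, as the unit sphere in `ℝ^(n+1)`. -/
def nSphere (n : ℕ) : Type :=
  Metric.sphere (0 : EuclideanSpace ℝ (Fin (n + 1))) 1

instance nSphere.topologicalSpace (n : ℕ) : TopologicalSpace (nSphere n) := by
  unfold nSphere; infer_instance

/-- A basepoint on the `n`-sphere. -/
def spherePt (n : ℕ) : nSphere n :=
  ⟨EuclideanSpace.single 0 1, by simp [EuclideanSpace.norm_single]⟩

/-- The wedge of a family of spheres, of dimensions `n i`. -/
def WedgeOfSpheres {ι : Type} (n : ι → ℕ) : Type :=
  Quot (fun (a b : Σ i, nSphere (n i)) =>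
    ∃ i j, a = ⟨i, spherePt (n i)⟩ ∧ b = ⟨j, spherePt (n j)⟩)

instance WedgeOfSpheres.topologicalSpace {ι : Type} (n : ι → ℕ) :
    TopologicalSpace (WedgeOfSpheres n) := by
  unfold WedgeOfSpheres; infer_instance

/-- A space is (homotopy equivalent to) a wedge of spheres if it is homotopy equivalent to a
wedge of finitely many spheres of possibly varying dimensions. -/
def IsWedgeOfSpheres (X : Type*) [TopologicalSpace X] : Prop :=
  ∃ (k : ℕ) (n : Fin k → ℕ), Nonempty (ContinuousMap.HomotopyEquiv X (WedgeOfSpheres n))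
/-- The matching complex of a simple graph: faces are finite sets of pairwise disjoint edges. -/
def matchingComplex {V : Type*} (G : SimpleGraph V) : Set (Finset (Sym2 V)) :=
  {s | (∀ e ∈ s, e ∈ G.edgeSet) ∧ ∀ e ∈ s, ∀ f ∈ s, e ≠ f → ∀ v, v ∈ e → v ∉ f}

/-- The open edge neighborhood `EN(e)`: the set of edges of `G` adjacent to (sharing a vertex
with) `e`, other than `e` itself. -/
def edgeNbhdOpen {V : Type*} (G : SimpleGraph V) (e : Sym2 V) : Set (Sym2 V) :=
  {f | f ∈ G.edgeSet ∧ f ≠ e ∧ ∃ v, v ∈ e ∧ v ∈ f}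

/-- The closed edge neighborhood `EN[e]`: the set of edges of `G` sharing a vertex with `e`,
together with `e` itself. -/
def edgeNbhdClosed {V : Type*} (G : SimpleGraph V) (e : Sym2 V) : Set (Sym2 V) :=
  {f | f ∈ G.edgeSet ∧ ∃ v, v ∈ e ∧ v ∈ f}

/-- Two chords of a circle, with endpoints at circle positions `a, b` and `c, d`
(positions measured injectively along the circle), cross iff their endpoints interleave. -/
def chordsCross (a b c d : ℝ) : Prop :=
  (min a b < min c d ∧ min c d < max a b ∧ max a b < max c d) ∨
  (min c d < min a b ∧ min a b < max c d ∧ max c d < max a b)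

/-- A graph is outerplanar iff it has a drawing with all vertices (injectively) on a circle
and edges drawn as pairwise noncrossing chords; equivalently, a planar drawing with every
vertex on the unbounded face. -/
def Outerplanar {V : Type*} (G : SimpleGraph V) : Prop :=
  ∃ f : V ↪ ℝ, ∀ a b c d, G.Adj a b → G.Adj c d →
    a ≠ c → a ≠ d → b ≠ c → b ≠ d → ¬ chordsCross (f a) (f b) (f c) (f d)

/-- An outerplanar graph is maximal outerplanar if adding any edge destroys outerplanarity. -/
def MaximalOuterplanar {V : Type*} (G : SimpleGraph V) : Prop :=
  Outerplanar G ∧ ∀ a b : V, a ≠ b → ¬ G.Adj a b →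
    ¬ Outerplanar (G ⊔ SimpleGraph.fromEdgeSet {s(a, b)})
/-- A cutpoint (cut-vertex) of a graph: a vertex whose removal disconnects two vertices that
were connected, i.e. whose removal increases the number of connected components. -/
def IsCutvertex {V : Type*} (G : SimpleGraph V) (v : V) : Prop :=
  ∃ a b : {u : V // u ≠ v}, G.Reachable a.1 b.1 ∧
    ¬ (G.induce {u : V | u ≠ v}).Reachable ⟨a.1, a.2⟩ ⟨b.1, b.2⟩

/-- A block of `G`: a maximal connected subgraph having no cutpoint of itself. -/
def IsBlock {V : Type*} (G : SimpleGraph V) (H : G.Subgraph) : Prop :=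
  H.Connected ∧ (∀ v, ¬ IsCutvertex H.coe v) ∧
    ∀ H' : G.Subgraph, H ≤ H' → H'.Connected → (∀ v, ¬ IsCutvertex H'.coe v) → H' = H

/-- The block-cutpoint graph of `G`: the bipartite graph on blocks and cutpoints of `G`,
with a block `B` adjacent to a cutpoint `c` iff `c` belongs to `B`. -/
def blockCutpointGraph {V : Type*} (G : SimpleGraph V) :
    SimpleGraph ({H : G.Subgraph // IsBlock G H} ⊕ {v : V // IsCutvertex G v}) :=
  SimpleGraph.fromRel (fun x y =>
    ∃ B c, x = Sum.inl B ∧ y = Sum.inr c ∧ c.1 ∈ B.1.verts)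

/-- A cycle (given as a closed walk) is chordless if every edge of `G` joining two of its
vertices is an edge of the cycle.  In an outerplanar graph drawn with all vertices on the
unbounded face, the basic cycles (boundaries of the bounded faces) are exactly the
chordless cycles. -/
def Chordless {V : Type*} (G : SimpleGraph V) {v : V} (p : G.Walk v v) : Prop :=
  ∀ a ∈ p.support, ∀ b ∈ p.support, G.Adj a b → s(a, b) ∈ p.edges

/-- The basic cycles of (an outerplanar graph) `G`, recorded by their edge sets. -/
def basicCycles {V : Type*} [DecidableEq V] (G : SimpleGraph V) : Set (Finset (Sym2 V)) :=
  {s | ∃ (v : V) (p : G.Walk v v), p.IsCycle ∧ Chordless G p ∧ s = p.edges.toFinset}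

/-- The weak dual of (an outerplanar graph) `G`: vertices are the basic cycles (bounded
faces), two being adjacent iff they share at least one edge. -/
def weakDual {V : Type*} [DecidableEq V] (G : SimpleGraph V) :
    SimpleGraph (basicCycles G) :=
  SimpleGraph.fromRel (fun s t => ((s.1 ∩ t.1) : Finset (Sym2 V)).Nonempty)

/-- A multigraph on vertex set `V`: an edge index type together with an assignment of
(unordered pairs of) endpoints. -/
structure Multigraph (V : Type u) : Type (max u (v + 1)) where
  E : Type v
  ends : E → Sym2 V

/-- The matching complex of a multigraph: faces are finite sets of pairwise
vertex-disjoint edges. -/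
def Multigraph.matchingComplex {V : Type*} (M : Multigraph V) : Set (Finset M.E) :=
  {s | ∀ i ∈ s, ∀ j ∈ s, i ≠ j → ∀ v, v ∈ M.ends i → v ∉ M.ends j}
namespace AuxWP

section general
variable {α : Type*} {K : Set (Finset α)}

lemma real_nonneg (f : realization K) (a : α) : 0 ≤ f.1 a := f.2.1 a

lemma real_cont_eval (a : α) : Continuous fun f : realization K => f.1 a :=
  (continuous_apply a).comp continuous_subtype_val

lemma real_single_le (f : realization K) {s : Finset α} (hsupp : Function.support f.1 ⊆ ↑s)
    (hsum : ∑ a ∈ s, f.1 a = 1) (a : α) : f.1 a ≤ 1 := by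
  classical
  by_cases ha : a ∈ s
  · have h2 : ∑ x ∈ ({a} : Finset α), f.1 x ≤ ∑ x ∈ s, f.1 x :=
      Finset.sum_le_sum_of_subset_of_nonneg (by simpa using ha) (fun i _ _ => f.2.1 i)
    rw [Finset.sum_singleton] at h2
    exact h2.trans hsum.le
  · have : f.1 a = 0 := by by_contra h0; exact ha (hsupp h0)
    rw [this]; norm_num

lemma real_pair_le (f : realization K) {a b : α} (hab : a ≠ b) : f.1 a + f.1 b ≤ 1 := by
  classical
  obtain ⟨s, _, hsupp, hsum⟩ := f.2.2
  by_cases ha : a ∈ s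
  · by_cases hb : b ∈ s
    · have h2 : ∑ x ∈ ({a, b} : Finset α), f.1 x ≤ ∑ x ∈ s, f.1 x :=
        Finset.sum_le_sum_of_subset_of_nonneg (by
          intro x hx; simp only [Finset.mem_insert, Finset.mem_singleton] at hx
          rcases hx with rfl | rfl <;> assumption)
          (fun i _ _ => f.2.1 i)
      rw [Finset.sum_insert (by simpa using hab), Finset.sum_singleton] at h2
      exact h2.trans hsum.le
    · have hb0 : f.1 b = 0 := by
        by_contra hb0; exact hb (hsupp hb0)
      rw [hb0, add_zero]
      exact real_single_le f hsupp hsum a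
  · have ha0 : f.1 a = 0 := by by_contra h0; exact ha (hsupp h0)
    rw [ha0, zero_add]
    exact real_single_le f hsupp hsum b

lemma real_le_one (f : realization K) (a : α) : f.1 a ≤ 1 := by
  obtain ⟨s, _, hsupp, hsum⟩ := f.2.2
  exact real_single_le f hsupp hsum a

end general

section mc
variable {V : Type*}

lemma mc_mono (G' : SimpleGraph V) {s t : Finset (Sym2 V)}
    (hs : s ∈ matchingComplex G') (hts : t ⊆ s) : t ∈ matchingComplex G' :=
  ⟨fun k hk => hs.1 k (hts hk), fun k hk l hl => hs.2 k (hts hk) l (hts hl)⟩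

lemma mc_del_subset (G' : SimpleGraph V) (S : Set (Sym2 V)) :
    matchingComplex (G'.deleteEdges S) ⊆ matchingComplex G' := by
  intro s hs
  refine ⟨fun k hk => ?_, hs.2⟩
  have := hs.1 k hk
  rw [SimpleGraph.edgeSet_deleteEdges] at this
  exact this.1

lemma singleton_mem_mc (G' : SimpleGraph V) {k : Sym2 V} (hk : k ∈ G'.edgeSet) :
    {k} ∈ matchingComplex G' := by
  refine ⟨by simpa using hk, ?_⟩
  intro a ha b hb hab
  simp only [Finset.mem_singleton] at ha hb
  exact absurd (ha.trans hb.symm) hab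

lemma exists_good_face (G' : SimpleGraph V) (f : realization (matchingComplex G')) :
    ∃ s ∈ matchingComplex G', (↑s = Function.support f.1) ∧ ∑ a ∈ s, f.1 a = 1 := by
  classical
  obtain ⟨s₀, hs₀, hsupp, hsum⟩ := f.2.2
  refine ⟨s₀.filter (fun a => f.1 a ≠ 0), mc_mono G' hs₀ (Finset.filter_subset _ _), ?_, ?_⟩
  · ext a
    simp only [Finset.coe_filter, Set.mem_setOf_eq, Function.mem_support]
    constructor
    · rintro ⟨-, h⟩; exact h
    · intro h; exact ⟨hsupp h, h⟩
  · rw [Finset.sum_filter_ne_zero]; exact hsum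

end mc

section graph
open scoped Classical
set_option linter.unusedSectionVars false
variable {V : Type*} {G : SimpleGraph V} {e h : Sym2 V}
variable (he : e ∈ G.edgeSet) (hh : h ∈ G.edgeSet) (hne : e ≠ h)
variable (hsub : edgeNbhdClosed G e ⊂ edgeNbhdClosed G h)

include he hsub in
lemma e_mem_ENh : e ∈ edgeNbhdClosed G h := by
  apply hsub.1
  obtain ⟨x, y⟩ := e
  exact ⟨he, x, by simp, by simp⟩

include hh in
lemma h_mem_ENh : h ∈ edgeNbhdClosed G h := by
  obtain ⟨x, y⟩ := h
  exact ⟨hh, x, by simp, by simp⟩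

include hsub in
lemma e_vertex_disj (k : Sym2 V) (hk : k ∈ G.edgeSet) (hkE : k ∉ edgeNbhdClosed G h)
    (v : V) (hv : v ∈ e) : v ∉ k := fun hvk => hkE (hsub.1 ⟨hk, v, hv, hvk⟩)

lemma h_vertex_disj (k : Sym2 V) (hk : k ∈ G.edgeSet) (hkE : k ∉ edgeNbhdClosed G h)
    (v : V) (hv : v ∈ h) : v ∉ k := fun hvk => hkE ⟨hk, v, hv, hvk⟩

/-- members of a face of `M(G \ EN[h])` -/
lemma mcA_edge {s : Finset (Sym2 V)}
    (hs : s ∈ matchingComplex (G.deleteEdges (edgeNbhdClosed G h))) :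
    ∀ k ∈ s, k ∈ G.edgeSet ∧ k ∉ edgeNbhdClosed G h := by
  intro k hk
  have := hs.1 k hk
  rwa [SimpleGraph.edgeSet_deleteEdges] at this

include hh in
lemma erase_mem_mcA {s : Finset (Sym2 V)} (hs : s ∈ matchingComplex G) (hhs : h ∈ s) :
    s.erase h ∈ matchingComplex (G.deleteEdges (edgeNbhdClosed G h)) := by
  classical
  constructor
  · intro k hk
    have hk' := Finset.mem_of_mem_erase hk
    have hkh : k ≠ h := Finset.ne_of_mem_erase hk
    rw [SimpleGraph.edgeSet_deleteEdges]
    refine ⟨hs.1 k hk', ?_⟩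
    rintro ⟨-, v, hvh, hvk⟩
    exact hs.2 h hhs k hk' (Ne.symm hkh) v hvh hvk
  · intro a ha b hb hab
    exact hs.2 a (Finset.mem_of_mem_erase ha) b (Finset.mem_of_mem_erase hb) hab

include he hh hne hsub in
lemma insert_e_mem_mc0 {s : Finset (Sym2 V)}
    (hs : s ∈ matchingComplex (G.deleteEdges (edgeNbhdClosed G h))) :
    insert e s ∈ matchingComplex (G.deleteEdges {h}) := by
  classical
  constructor
  · intro k hk
    rw [SimpleGraph.edgeSet_deleteEdges]
    rcases Finset.mem_insert.1 hk with rfl | hk'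
    · exact ⟨he, by simpa using hne⟩
    · obtain ⟨hk1, hk2⟩ := mcA_edge hs k hk'
      refine ⟨hk1, ?_⟩
      simp only [Set.mem_singleton_iff]
      intro hkh; subst hkh; exact hk2 (h_mem_ENh hh)
  · intro a ha b hb hab v hva
    rcases Finset.mem_insert.1 ha with rfl | ha' <;> rcases Finset.mem_insert.1 hb with rfl | hb'
    · exact absurd rfl hab
    · obtain ⟨hb1, hb2⟩ := mcA_edge hs b hb'
      exact e_vertex_disj hsub b hb1 hb2 v hva
    · obtain ⟨ha1, ha2⟩ := mcA_edge hs a ha'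
      intro hvb
      exact e_vertex_disj hsub a ha1 ha2 v hvb hva
    · exact hs.2 a ha' b hb' hab v hva

include hh in
lemma insert_h_mem_mc {s : Finset (Sym2 V)}
    (hs : s ∈ matchingComplex (G.deleteEdges (edgeNbhdClosed G h))) :
    insert h s ∈ matchingComplex G := by
  classical
  constructor
  · intro k hk
    rcases Finset.mem_insert.1 hk with rfl | hk'
    · exact hh
    · exact (mcA_edge hs k hk').1
  · intro a ha b hb hab v hva
    rcases Finset.mem_insert.1 ha with rfl | ha' <;> rcases Finset.mem_insert.1 hb with rfl | hb'
    · exact absurd rfl hab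
    · obtain ⟨hb1, hb2⟩ := mcA_edge hs b hb'
      exact h_vertex_disj b hb1 hb2 v hva
    · obtain ⟨ha1, ha2⟩ := mcA_edge hs a ha'
      intro hvb
      exact h_vertex_disj a ha1 ha2 v hvb hva
    · exact hs.2 a ha' b hb' hab v hva

lemma mem_mc0_of_not_h {s : Finset (Sym2 V)} (hs : s ∈ matchingComplex G) (hh' : h ∉ s) :
    s ∈ matchingComplex (G.deleteEdges {h}) := by
  refine ⟨fun k hk => ?_, hs.2⟩
  rw [SimpleGraph.edgeSet_deleteEdges]
  refine ⟨hs.1 k hk, ?_⟩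
  simp only [Set.mem_singleton_iff]
  intro hkh; subst hkh; exact hh' hk

include he hsub in
lemma e_not_mem_mcA {s : Finset (Sym2 V)}
    (hs : s ∈ matchingComplex (G.deleteEdges (edgeNbhdClosed G h))) : e ∉ s :=
  fun hes => (mcA_edge hs e hes).2 (e_mem_ENh he hsub)

include hh in
lemma h_not_mem_mcA {s : Finset (Sym2 V)}
    (hs : s ∈ matchingComplex (G.deleteEdges (edgeNbhdClosed G h))) : h ∉ s :=
  fun hhs => (mcA_edge hs h hhs).2 (h_mem_ENh hh)

include he hh hne hsub in
lemma fe_eq_zero (f : realization (matchingComplex G)) (hf : f.1 h ≠ 0) : f.1 e = 0 := by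
  by_contra hfe
  obtain ⟨s, hs, hsupp, -⟩ := exists_good_face G f
  have hes : e ∈ s := by rw [← Finset.mem_coe, hsupp]; exact hfe
  have hhs : h ∈ s := by rw [← Finset.mem_coe, hsupp]; exact hf
  obtain ⟨-, v, hvh, hve⟩ := e_mem_ENh he hsub
  exact hs.2 e hes h hhs hne v hve hvh

/-- a point of the realization of `M(G \ {h})` has `h`-coordinate zero -/
lemma x0_h_eq_zero (f : realization (matchingComplex (G.deleteEdges {h}))) : f.1 h = 0 := by
  by_contra hf
  obtain ⟨s, hs, hsupp, -⟩ := exists_good_face _ f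
  have hhs : h ∈ s := by rw [← Finset.mem_coe, hsupp]; exact hf
  have := hs.1 h hhs
  rw [SimpleGraph.edgeSet_deleteEdges] at this
  simp at this

include he hsub in
lemma a_e_eq_zero (g : realization (matchingComplex (G.deleteEdges (edgeNbhdClosed G h)))) :
    g.1 e = 0 := by
  by_contra hg
  obtain ⟨s, hs, hsupp, -⟩ := exists_good_face _ g
  have : e ∈ s := by rw [← Finset.mem_coe, hsupp]; exact hg
  exact e_not_mem_mcA he hsub hs this

include hh in
lemma a_h_eq_zero (g : realization (matchingComplex (G.deleteEdges (edgeNbhdClosed G h)))) :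
    g.1 h = 0 := by
  by_contra hg
  obtain ⟨s, hs, hsupp, -⟩ := exists_good_face _ g
  have : h ∈ s := by rw [← Finset.mem_coe, hsupp]; exact hg
  exact h_not_mem_mcA hh hs this

include he hh hne hsub in
lemma ones_eq_zero (f : realization (matchingComplex G)) (hf : f.1 h = 1) (a : Sym2 V)
    (ha : a ≠ h) : f.1 a = 0 := by
  have h1 := real_pair_le f ha
  have h2 := real_nonneg f a
  rw [hf] at h1; linarith

end graph

section maps
open scoped Classical
set_option linter.unusedSectionVars false
set_option maxHeartbeats 1000000
variable {V : Type*} (G : SimpleGraph V) (e h : Sym2 V)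
variable (he : e ∈ G.edgeSet) (hh : h ∈ G.edgeSet) (hne : e ≠ h)
variable (hsub : edgeNbhdClosed G e ⊂ edgeNbhdClosed G h)

def deltaPt {α : Type*} {K : Set (Finset α)} (k : α) (hk : {k} ∈ K) : realization K :=
  ⟨fun b => if b = k then 1 else 0,
   fun b => by by_cases hb : b = k <;> simp [hb],
   {k}, hk, by
      intro b hb
      simp only [Function.mem_support, ne_eq, ite_eq_right_iff, Classical.not_forall] at hb
      simp [hb.1], by simp⟩

@[simp] lemma deltaPt_val {α : Type*} {K : Set (Finset α)} (k : α) (hk : {k} ∈ K) (b : α) :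
    (deltaPt k hk).1 b = if b = k then 1 else 0 := rfl

def incl0 (f : realization (matchingComplex (G.deleteEdges {h}))) :
    realization (matchingComplex G) :=
  ⟨f.1, f.2.1, by
    obtain ⟨s, hs, h1, h2⟩ := f.2.2
    exact ⟨s, mc_del_subset G {h} hs, h1, h2⟩⟩

lemma incl0_cont : Continuous (incl0 G h) :=
  Continuous.subtype_mk continuous_subtype_val _

/-! ### the map `phi1`: slide the `h`-mass onto `e` -/

def phi1Val (f : Sym2 V → ℝ) : Sym2 V → ℝ := fun a =>
  if a = h then 0
  else if a = e then 2*min (f h) (1/2) + (1-2*min (f h) (1/2)) * (f e/(1-min (f h) (1/2)))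
  else (1-2*min (f h) (1/2)) * (f a/(1-min (f h) (1/2)))

include he hh hne hsub in
lemma phi1_mem (f : realization (matchingComplex G)) :
    (∀ a, 0 ≤ phi1Val e h f.1 a) ∧ ∃ s ∈ matchingComplex (G.deleteEdges {h}),
      Function.support (phi1Val e h f.1) ⊆ ↑s ∧ ∑ a ∈ s, phi1Val e h f.1 a = 1 := by
  have ht0 : 0 ≤ f.1 h := real_nonneg f h
  have ht1 : f.1 h ≤ 1 := real_le_one f h
  have ht₁0 : 0 ≤ min (f.1 h) (1/2) := le_min ht0 (by norm_num)
  have ht₁half : min (f.1 h) (1/2) ≤ 1/2 := min_le_right _ _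
  have hden : (0:ℝ) < 1 - min (f.1 h) (1/2) := by linarith
  constructor
  · intro a
    unfold phi1Val
    try dsimp only
    by_cases hah : a = h
    · rw [if_pos hah]
    · rw [if_neg hah]
      by_cases hae : a = e
      · rw [if_pos hae]
        exact add_nonneg (by linarith)
          (mul_nonneg (by linarith) (div_nonneg (real_nonneg f e) hden.le))
      · rw [if_neg hae]
        exact mul_nonneg (by linarith) (div_nonneg (real_nonneg f a) hden.le)
  · obtain ⟨s, hs, hsupp, hsum⟩ := exists_good_face G f
    by_cases hth : f.1 h = 0
    · have hfun : phi1Val e h f.1 = f.1 := by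
        funext a
        unfold phi1Val
        try dsimp only
        by_cases hah : a = h
        · rw [if_pos hah, hah, hth]
        · have ht₁ : min (f.1 h) (1/2) = 0 := by rw [hth]; norm_num
          rw [if_neg hah, ht₁]
          by_cases hae : a = e
          · rw [if_pos hae, hae]; norm_num
          · rw [if_neg hae]; norm_num
      have hhs : h ∉ s := by
        intro hmem
        have : h ∈ Function.support f.1 := by rw [← hsupp]; exact Finset.mem_coe.2 hmem
        exact this hth
      exact ⟨s, mem_mc0_of_not_h hs hhs, by rw [hfun]; exact hsupp.symm.subset, by rw [hfun]; exact hsum⟩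
    · have hhs : h ∈ s := by
        rw [← Finset.mem_coe, hsupp]; exact hth
      have hfe : f.1 e = 0 := fe_eq_zero he hh hne hsub f hth
      have hes : e ∉ s := by
        intro hmem
        have : e ∈ Function.support f.1 := by rw [← hsupp]; exact Finset.mem_coe.2 hmem
        exact this hfe
      refine ⟨insert e (s.erase h),
        insert_e_mem_mc0 he hh hne hsub (erase_mem_mcA hh hs hhs), ?_, ?_⟩
      · intro a ha
        simp only [Function.mem_support] at ha
        unfold phi1Val at ha
        try dsimp only at ha
        by_cases hah : a = h
        · rw [if_pos hah] at ha; exact absurd rfl ha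
        · rw [if_neg hah] at ha
          by_cases hae : a = e
          · rw [Finset.coe_insert]; exact Set.mem_insert_iff.2 (Or.inl hae)
          · rw [if_neg hae] at ha
            have hfa : f.1 a ≠ 0 := by
              intro h0; rw [h0] at ha; simp at ha
            have has : a ∈ s := by
              rw [← Finset.mem_coe, hsupp]; exact hfa
            rw [Finset.coe_insert]
            exact Set.mem_insert_iff.2 (Or.inr (Finset.mem_coe.2 (Finset.mem_erase.2 ⟨hah, has⟩)))
      · have hesE : e ∉ s.erase h := fun hmem => hes (Finset.mem_of_mem_erase hmem)
        rw [Finset.sum_insert hesE]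
        have hsum_erase : ∑ a ∈ s.erase h, f.1 a = 1 - f.1 h := by
          have h2 := Finset.add_sum_erase s f.1 hhs
          rw [hsum] at h2; linarith
        have hterm : ∀ a ∈ s.erase h,
            phi1Val e h f.1 a = f.1 a * ((1-2*min (f.1 h) (1/2))/(1-min (f.1 h) (1/2))) := by
          intro a ha
          have hah : a ≠ h := (Finset.mem_erase.1 ha).1
          have hae : a ≠ e := fun hc => hes (hc ▸ Finset.mem_of_mem_erase ha)
          unfold phi1Val
          try dsimp only
          rw [if_neg hah, if_neg hae]
          ring
        rw [Finset.sum_congr rfl hterm, ← Finset.sum_mul, hsum_erase]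
        have hvalE : phi1Val e h f.1 e = 2*min (f.1 h) (1/2) := by
          unfold phi1Val
          try dsimp only
          rw [if_neg hne, if_pos rfl, hfe]
          try simp
        rw [hvalE]
        by_cases htle : f.1 h ≤ 1/2
        · rw [min_eq_left htle]
          have hne' : (1 - f.1 h) ≠ 0 := by linarith
          field_simp
          try ring
        · rw [min_eq_right (le_of_not_ge htle)]
          norm_num

def phi1 (f : realization (matchingComplex G)) :
    realization (matchingComplex (G.deleteEdges {h})) :=
  ⟨phi1Val e h f.1, phi1_mem G e h he hh hne hsub f⟩

lemma phi1_cont : Continuous (phi1 G e h he hh hne hsub) := by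
  apply Continuous.subtype_mk
  apply continuous_pi
  intro a
  have hm : Continuous fun f : realization (matchingComplex G) => min (f.1 h) (1/2) :=
    (real_cont_eval h).min continuous_const
  have hden : ∀ f : realization (matchingComplex G), (1 - min (f.1 h) (1/2)) ≠ 0 := by
    intro f
    have := min_le_right (f.1 h) (1/2 : ℝ)
    intro hc; linarith
  unfold phi1Val
  try dsimp only
  by_cases hah : a = h
  · simp only [if_pos hah]; exact continuous_const
  · simp only [if_neg hah]
    by_cases hae : a = e
    · simp only [if_pos hae]
      exact ((continuous_const.mul hm).add
        ((continuous_const.sub (continuous_const.mul hm)).mul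
          ((real_cont_eval e).div (continuous_const.sub hm) hden)))
    · simp only [if_neg hae]
      exact ((continuous_const.sub (continuous_const.mul hm)).mul
        ((real_cont_eval a).div (continuous_const.sub hm) hden))

end maps

section maps2
open scoped Classical
set_option linter.unusedSectionVars false
set_option maxHeartbeats 1000000
variable {V : Type*} (G : SimpleGraph V) (e h : Sym2 V)
variable (he : e ∈ G.edgeSet) (hh : h ∈ G.edgeSet) (hne : e ≠ h)
variable (hsub : edgeNbhdClosed G e ⊂ edgeNbhdClosed G h)

include he hne in
lemma e_mem_mc0 : {e} ∈ matchingComplex (G.deleteEdges {h}) :=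
  singleton_mem_mc _ (by
    rw [SimpleGraph.edgeSet_deleteEdges]
    exact ⟨he, by simpa using hne⟩)

def basept0 : realization (matchingComplex (G.deleteEdges {h})) :=
  deltaPt e (e_mem_mc0 G e h he hne)

def baseptS : Susp (realization (matchingComplex (G.deleteEdges (edgeNbhdClosed G h)))) :=
  Quot.mk _ (Sum.inr false)

def deltaEX : realization (matchingComplex G) := deltaPt e (singleton_mem_mc G he)

def deltaHX : realization (matchingComplex G) := deltaPt h (singleton_mem_mc G hh)

/-! ### renormalized rest of a point with positive `h`-mass -/

def gVal (f : Sym2 V → ℝ) : Sym2 V → ℝ := fun a => if a = h then 0 else f a / (1 - f h)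

include he hh hne hsub in
lemma g_mem (f : realization (matchingComplex G)) (h0 : f.1 h ≠ 0) (h1 : f.1 h ≠ 1) :
    (∀ a, 0 ≤ gVal h f.1 a) ∧
      ∃ s ∈ matchingComplex (G.deleteEdges (edgeNbhdClosed G h)),
        Function.support (gVal h f.1) ⊆ ↑s ∧ ∑ a ∈ s, gVal h f.1 a = 1 := by
  have ht1 : f.1 h ≤ 1 := real_le_one f h
  have hlt : f.1 h < 1 := lt_of_le_of_ne ht1 h1
  have hden : (0:ℝ) < 1 - f.1 h := by linarith
  constructor
  · intro a
    unfold gVal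
    try dsimp only
    by_cases hah : a = h
    · rw [if_pos hah]
    · rw [if_neg hah]
      exact div_nonneg (real_nonneg f a) hden.le
  · obtain ⟨s, hs, hsupp, hsum⟩ := exists_good_face G f
    have hhs : h ∈ s := by rw [← Finset.mem_coe, hsupp]; exact h0
    refine ⟨s.erase h, erase_mem_mcA hh hs hhs, ?_, ?_⟩
    · intro a ha
      simp only [Function.mem_support] at ha
      unfold gVal at ha
      try dsimp only at ha
      by_cases hah : a = h
      · rw [if_pos hah] at ha; exact absurd rfl ha
      · rw [if_neg hah] at ha
        have hfa : f.1 a ≠ 0 := by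
          intro hz; rw [hz] at ha; simp at ha
        have has : a ∈ s := by rw [← Finset.mem_coe, hsupp]; exact hfa
        exact Finset.mem_coe.2 (Finset.mem_erase.2 ⟨hah, has⟩)
    · have hsum_erase : ∑ a ∈ s.erase h, f.1 a = 1 - f.1 h := by
        have h2 := Finset.add_sum_erase s f.1 hhs
        rw [hsum] at h2; linarith
      have hterm : ∀ a ∈ s.erase h, gVal h f.1 a = f.1 a * (1 - f.1 h)⁻¹ := by
        intro a ha
        unfold gVal
        try dsimp only
        rw [if_neg (Finset.mem_erase.1 ha).1]
        ring
      rw [Finset.sum_congr rfl hterm, ← Finset.sum_mul, hsum_erase]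
      field_simp

def gPt (f : realization (matchingComplex G)) (h0 : f.1 h ≠ 0) (h1 : f.1 h ≠ 1) :
    realization (matchingComplex (G.deleteEdges (edgeNbhdClosed G h))) :=
  ⟨gVal h f.1, g_mem G e h he hh hne hsub f h0 h1⟩

/-! ### the suspension inside `X`: the map underlying `ψ` on the cylinder -/

def psiVal (g : Sym2 V → ℝ) (u : ℝ) : Sym2 V → ℝ := fun a =>
  if a = e then max (1-2*u) 0 else if a = h then max (2*u-1) 0 else (1-|2*u-1|) * g a

include he hh hne hsub in
lemma psi_mem (g : realization (matchingComplex (G.deleteEdges (edgeNbhdClosed G h))))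
    (u : ℝ) (hu0 : 0 ≤ u) (hu1 : u ≤ 1) :
    (∀ a, 0 ≤ psiVal e h g.1 u a) ∧ ∃ s ∈ matchingComplex G,
      Function.support (psiVal e h g.1 u) ⊆ ↑s ∧ ∑ a ∈ s, psiVal e h g.1 u a = 1 := by
  have habs : |2*u-1| ≤ 1 := abs_le.2 ⟨by linarith, by linarith⟩
  constructor
  · intro a
    unfold psiVal
    try dsimp only
    by_cases hae : a = e
    · rw [if_pos hae]; exact le_max_right _ _
    · rw [if_neg hae]
      by_cases hah : a = h
      · rw [if_pos hah]; exact le_max_right _ _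
      · rw [if_neg hah]
        exact mul_nonneg (by linarith) (real_nonneg g a)
  · obtain ⟨s, hs, hsupp, hsum⟩ := exists_good_face _ g
    have hes : e ∉ s := e_not_mem_mcA he hsub hs
    have hhs : h ∉ s := h_not_mem_mcA hh hs
    by_cases hu : u ≤ 1/2
    · have habs' : |2*u-1| = 1-2*u := by
        rw [abs_of_nonpos (by linarith)]; ring
      refine ⟨insert e s, mc_del_subset G {h} (insert_e_mem_mc0 he hh hne hsub hs), ?_, ?_⟩
      · intro a ha
        simp only [Function.mem_support] at ha
        unfold psiVal at ha
        try dsimp only at ha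
        by_cases hae : a = e
        · rw [Finset.coe_insert]; exact Set.mem_insert_iff.2 (Or.inl hae)
        · rw [if_neg hae] at ha
          by_cases hah : a = h
          · rw [if_pos hah, max_eq_right (by linarith : 2*u-1 ≤ 0)] at ha
            exact absurd rfl ha
          · rw [if_neg hah] at ha
            have hga : g.1 a ≠ 0 := by
              intro hz; rw [hz] at ha; simp at ha
            have has : a ∈ s := by rw [← Finset.mem_coe, hsupp]; exact hga
            rw [Finset.coe_insert]
            exact Set.mem_insert_iff.2 (Or.inr (Finset.mem_coe.2 has))
      · rw [Finset.sum_insert hes]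
        have hvalE : psiVal e h g.1 u e = 1-2*u := by
          unfold psiVal
          try dsimp only
          rw [if_pos rfl, max_eq_left (by linarith : (0:ℝ) ≤ 1-2*u)]
        have hterm : ∀ a ∈ s, psiVal e h g.1 u a = g.1 a * (2*u) := by
          intro a ha
          have hae : a ≠ e := fun hc => hes (hc ▸ ha)
          have hah : a ≠ h := fun hc => hhs (hc ▸ ha)
          unfold psiVal
          try dsimp only
          rw [if_neg hae, if_neg hah, habs']
          ring
        rw [hvalE, Finset.sum_congr rfl hterm, ← Finset.sum_mul, hsum]
        ring
    · have habs' : |2*u-1| = 2*u-1 := abs_of_nonneg (by linarith)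
      refine ⟨insert h s, insert_h_mem_mc hh hs, ?_, ?_⟩
      · intro a ha
        simp only [Function.mem_support] at ha
        unfold psiVal at ha
        try dsimp only at ha
        by_cases hae : a = e
        · rw [if_pos hae, max_eq_right (by linarith : 1-2*u ≤ 0)] at ha
          exact absurd rfl ha
        · rw [if_neg hae] at ha
          by_cases hah : a = h
          · rw [Finset.coe_insert]; exact Set.mem_insert_iff.2 (Or.inl hah)
          · rw [if_neg hah] at ha
            have hga : g.1 a ≠ 0 := by
              intro hz; rw [hz] at ha; simp at ha
            have has : a ∈ s := by rw [← Finset.mem_coe, hsupp]; exact hga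
            rw [Finset.coe_insert]
            exact Set.mem_insert_iff.2 (Or.inr (Finset.mem_coe.2 has))
      · rw [Finset.sum_insert hhs]
        have hvalH : psiVal e h g.1 u h = 2*u-1 := by
          unfold psiVal
          try dsimp only
          rw [if_neg (Ne.symm hne), if_pos rfl, max_eq_left (by linarith : (0:ℝ) ≤ 2*u-1)]
        have hterm : ∀ a ∈ s, psiVal e h g.1 u a = g.1 a * (2-2*u) := by
          intro a ha
          have hae : a ≠ e := fun hc => hes (hc ▸ ha)
          have hah : a ≠ h := fun hc => hhs (hc ▸ ha)
          unfold psiVal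
          try dsimp only
          rw [if_neg hae, if_neg hah, habs']
          ring
        rw [hvalH, Finset.sum_congr rfl hterm, ← Finset.sum_mul, hsum]
        ring

def psiPt (g : realization (matchingComplex (G.deleteEdges (edgeNbhdClosed G h))))
    (u : Set.Icc (0:ℝ) 1) : realization (matchingComplex G) :=
  ⟨psiVal e h g.1 u.1, psi_mem G e h he hh hne hsub g u.1 u.2.1 u.2.2⟩

/-! ### the cone from `e` over `A`, inside `X₀` -/

def coneVal (g : Sym2 V → ℝ) (lam : ℝ) : Sym2 V → ℝ := fun a =>
  if a = e then 1 - max (min lam 1) 0 else if a = h then 0 else max (min lam 1) 0 * g a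

include he hh hne hsub in
lemma cone_mem (g : realization (matchingComplex (G.deleteEdges (edgeNbhdClosed G h))))
    (lam : ℝ) :
    (∀ a, 0 ≤ coneVal e h g.1 lam a) ∧ ∃ s ∈ matchingComplex (G.deleteEdges {h}),
      Function.support (coneVal e h g.1 lam) ⊆ ↑s ∧ ∑ a ∈ s, coneVal e h g.1 lam a = 1 := by
  have hc0 : 0 ≤ max (min lam 1) 0 := le_max_right _ _
  have hc1 : max (min lam 1) 0 ≤ 1 := max_le (min_le_right _ _) (by norm_num)
  constructor
  · intro a
    unfold coneVal
    try dsimp only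
    by_cases hae : a = e
    · rw [if_pos hae]; linarith
    · rw [if_neg hae]
      by_cases hah : a = h
      · rw [if_pos hah]
      · rw [if_neg hah]
        exact mul_nonneg hc0 (real_nonneg g a)
  · obtain ⟨s, hs, hsupp, hsum⟩ := exists_good_face _ g
    have hes : e ∉ s := e_not_mem_mcA he hsub hs
    have hhs : h ∉ s := h_not_mem_mcA hh hs
    refine ⟨insert e s, insert_e_mem_mc0 he hh hne hsub hs, ?_, ?_⟩
    · intro a ha
      simp only [Function.mem_support] at ha
      unfold coneVal at ha
      try dsimp only at ha
      by_cases hae : a = e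
      · rw [Finset.coe_insert]; exact Set.mem_insert_iff.2 (Or.inl hae)
      · rw [if_neg hae] at ha
        by_cases hah : a = h
        · rw [if_pos hah] at ha; exact absurd rfl ha
        · rw [if_neg hah] at ha
          have hga : g.1 a ≠ 0 := by
            intro hz; rw [hz] at ha; simp at ha
          have has : a ∈ s := by rw [← Finset.mem_coe, hsupp]; exact hga
          rw [Finset.coe_insert]
          exact Set.mem_insert_iff.2 (Or.inr (Finset.mem_coe.2 has))
    · rw [Finset.sum_insert hes]
      have hvalE : coneVal e h g.1 lam e = 1 - max (min lam 1) 0 := by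
        unfold coneVal
        try dsimp only
        rw [if_pos rfl]
      have hterm : ∀ a ∈ s, coneVal e h g.1 lam a = g.1 a * max (min lam 1) 0 := by
        intro a ha
        have hae : a ≠ e := fun hc => hes (hc ▸ ha)
        have hah : a ≠ h := fun hc => hhs (hc ▸ ha)
        unfold coneVal
        try dsimp only
        rw [if_neg hae, if_neg hah]
        ring
      rw [hvalE, Finset.sum_congr rfl hterm, ← Finset.sum_mul, hsum]
      ring

def conePt (g : realization (matchingComplex (G.deleteEdges (edgeNbhdClosed G h))))
    (lam : ℝ) : realization (matchingComplex (G.deleteEdges {h})) :=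
  ⟨coneVal e h g.1 lam, cone_mem G e h he hh hne hsub g lam⟩

end maps2

section maps3
open scoped Classical
set_option linter.unusedSectionVars false
set_option maxHeartbeats 1000000
variable {V : Type*} (G : SimpleGraph V) (e h : Sym2 V)
variable (he : e ∈ G.edgeSet) (hh : h ∈ G.edgeSet) (hne : e ≠ h)
variable (hsub : edgeNbhdClosed G e ⊂ edgeNbhdClosed G h)

lemma susp_mk_zero {Y : Type*} [TopologicalSpace Y] (g : Y) (u : Set.Icc (0:ℝ) 1)
    (hu : (u:ℝ) = 0) :
    (Quot.mk _ (Sum.inl (g, u)) : Susp Y) = Quot.mk _ (Sum.inr false) :=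
  Quot.sound (Or.inl ⟨hu, rfl⟩)

lemma susp_mk_one {Y : Type*} [TopologicalSpace Y] (g : Y) (u : Set.Icc (0:ℝ) 1)
    (hu : (u:ℝ) = 1) :
    (Quot.mk _ (Sum.inl (g, u)) : Susp Y) = Quot.mk _ (Sum.inr true) :=
  Quot.sound (Or.inr ⟨hu, rfl⟩)

lemma wedge_glue {Z : Type*} {Y : Type*} [TopologicalSpace Z] [TopologicalSpace Y]
    (x : Z) (y : Y) :
    (Quot.mk _ (Sum.inl x) : Wedge Z Y x y) = Quot.mk _ (Sum.inr y) :=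
  Quot.sound ⟨rfl, rfl⟩

/-! ### ψ -/

def psiSuspMap :
    Susp (realization (matchingComplex (G.deleteEdges (edgeNbhdClosed G h)))) →
      realization (matchingComplex G) :=
  Quot.lift (Sum.elim (fun p => psiPt G e h he hh hne hsub p.1 p.2)
    (fun b => cond b (deltaHX G h hh) (deltaEX G e he))) (by
      rintro (p | b) (q | c) hpq
      · exact hpq.elim
      · rcases hpq with ⟨h0, rfl⟩ | ⟨h1, rfl⟩
        · apply Subtype.ext; funext a
          show psiVal e h p.1.1 (↑p.2) a = (deltaEX G e he).1 a
          have hd : (deltaEX G e he).1 a = if a = e then 1 else 0 := by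
            simp [deltaEX, deltaPt]
          rw [hd, h0]
          unfold psiVal
          by_cases hae : a = e
          · rw [if_pos hae, if_pos hae]; norm_num
          · rw [if_neg hae, if_neg hae]
            by_cases hah : a = h
            · rw [if_pos hah]; norm_num
            · rw [if_neg hah]
              rw [show |2*(0:ℝ)-1| = 1 by norm_num]
              ring
        · apply Subtype.ext; funext a
          show psiVal e h p.1.1 (↑p.2) a = (deltaHX G h hh).1 a
          have hd : (deltaHX G h hh).1 a = if a = h then 1 else 0 := by
            simp [deltaHX, deltaPt]
          rw [hd, h1]
          unfold psiVal
          by_cases hae : a = e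
          · rw [if_pos hae, hae, if_neg hne]; norm_num
          · rw [if_neg hae]
            by_cases hah : a = h
            · rw [if_pos hah, if_pos hah]; norm_num
            · rw [if_neg hah, if_neg hah]
              rw [show |2*(1:ℝ)-1| = 1 by norm_num]
              ring
      · exact hpq.elim
      · exact hpq.elim)

lemma psiSusp_cont : Continuous (psiSuspMap G e h he hh hne hsub) := by
  apply continuous_quot_lift
  apply Continuous.sumElim
  · apply Continuous.subtype_mk
    apply continuous_pi
    intro a
    have hu : Continuous fun p :
        realization (matchingComplex (G.deleteEdges (edgeNbhdClosed G h))) ×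
          Set.Icc (0:ℝ) 1 => (p.2 : ℝ) := continuous_subtype_val.comp continuous_snd
    have hg : Continuous fun p :
        realization (matchingComplex (G.deleteEdges (edgeNbhdClosed G h))) ×
          Set.Icc (0:ℝ) 1 => p.1.1 a :=
      (continuous_apply a).comp (continuous_subtype_val.comp continuous_fst)
    show Continuous fun p : realization (matchingComplex (G.deleteEdges (edgeNbhdClosed G h))) ×
      Set.Icc (0:ℝ) 1 => psiVal e h p.1.1 (↑p.2) a
    unfold psiVal
    by_cases hae : a = e
    · simp only [if_pos hae]
      exact (continuous_const.sub (continuous_const.mul hu)).max continuous_const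
    · simp only [if_neg hae]
      by_cases hah : a = h
      · simp only [if_pos hah]
        exact ((continuous_const.mul hu).sub continuous_const).max continuous_const
      · simp only [if_neg hah]
        exact (continuous_const.sub ((continuous_const.mul hu).sub continuous_const).abs).mul hg
  · exact continuous_of_discreteTopology

def psiW :
    Wedge (realization (matchingComplex (G.deleteEdges {h})))
      (Susp (realization (matchingComplex (G.deleteEdges (edgeNbhdClosed G h)))))
      (basept0 G e h he hne) (baseptS G h) → realization (matchingComplex G) :=
  Quot.lift (Sum.elim (incl0 G h) (psiSuspMap G e h he hh hne hsub)) (by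
    rintro a b ⟨rfl, rfl⟩
    show incl0 G h (basept0 G e h he hne) = psiSuspMap G e h he hh hne hsub (baseptS G h)
    apply Subtype.ext
    rfl)

lemma psiW_cont : Continuous (psiW G e h he hh hne hsub) :=
  continuous_quot_lift _ ((incl0_cont G h).sumElim (psiSusp_cont G e h he hh hne hsub))

/-! ### φ -/

def branch2X (f : realization (matchingComplex G)) :
    Susp (realization (matchingComplex (G.deleteEdges (edgeNbhdClosed G h)))) :=
  if hS : 1/2 ≤ f.1 h then
    (if h1 : f.1 h = 1 then Quot.mk _ (Sum.inr true)
     else Quot.mk _ (Sum.inl (gPt G e h he hh hne hsub f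
        (by intro hz; rw [hz] at hS; norm_num at hS) h1,
        Set.projIcc 0 1 zero_le_one (4*f.1 h - 2))))
  else Quot.mk _ (Sum.inr true)

def phiW (f : realization (matchingComplex G)) :
    Wedge (realization (matchingComplex (G.deleteEdges {h})))
      (Susp (realization (matchingComplex (G.deleteEdges (edgeNbhdClosed G h)))))
      (basept0 G e h he hne) (baseptS G h) :=
  if f.1 h ≤ 1/2 then Quot.mk _ (Sum.inl (phi1 G e h he hh hne hsub f))
  else Quot.mk _ (Sum.inr (branch2X G e h he hh hne hsub f))

lemma phi1Val_of_zero (f : Sym2 V → ℝ) (hf : f h = 0) : phi1Val e h f = f := by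
  funext a
  unfold phi1Val
  try dsimp only
  have ht₁ : min (f h) (1/2) = 0 := by rw [hf]; norm_num
  by_cases hah : a = h
  · rw [if_pos hah, hah, hf]
  · rw [if_neg hah, ht₁]
    by_cases hae : a = e
    · rw [if_pos hae, hae]; norm_num
    · rw [if_neg hae]; norm_num

lemma phi1_half (f : realization (matchingComplex G)) (hf : f.1 h = 1/2) :
    phi1 G e h he hh hne hsub f = basept0 G e h he hne := by
  apply Subtype.ext
  funext a
  show phi1Val e h f.1 a = (deltaPt e _).1 a
  rw [deltaPt_val]
  unfold phi1Val
  try dsimp only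
  have ht₁ : min (f.1 h) (1/2) = 1/2 := by rw [hf]; exact min_self _
  by_cases hah : a = h
  · rw [if_pos hah, hah, if_neg (Ne.symm hne)]
  · rw [if_neg hah, ht₁]
    by_cases hae : a = e
    · rw [if_pos hae, if_pos hae]; norm_num
    · rw [if_neg hae, if_neg hae]; norm_num

lemma branch2X_half (f : realization (matchingComplex G)) (hf : f.1 h = 1/2) :
    branch2X G e h he hh hne hsub f = baseptS G h := by
  unfold branch2X
  erw [dif_pos (by rw [hf] : 1/2 ≤ f.1 h)]
  erw [dif_neg (by rw [hf]; norm_num : ¬ f.1 h = 1)]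
  apply susp_mk_zero
  rw [Set.coe_projIcc, hf]
  norm_num

lemma branch2X_top (f : realization (matchingComplex G)) (hf : 7/8 < f.1 h) :
    branch2X G e h he hh hne hsub f = Quot.mk _ (Sum.inr true) := by
  unfold branch2X
  erw [dif_pos (by linarith : 1/2 ≤ f.1 h)]
  by_cases h1 : f.1 h = 1
  · erw [dif_pos h1]
  · erw [dif_neg h1]
    apply susp_mk_one
    rw [Set.coe_projIcc]
    have hle : f.1 h ≤ 1 := real_le_one f h
    rw [min_eq_left (by linarith : (1:ℝ) ≤ 4*f.1 h - 2)]
    norm_num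

lemma branch2X_val (f : realization (matchingComplex G)) (h0 : f.1 h ≠ 0) (h1 : f.1 h ≠ 1)
    (hS : 1/2 ≤ f.1 h) :
    branch2X G e h he hh hne hsub f =
      Quot.mk _ (Sum.inl (gPt G e h he hh hne hsub f h0 h1,
        Set.projIcc 0 1 zero_le_one (4*f.1 h - 2))) := by
  unfold branch2X
  erw [dif_pos hS, dif_neg h1]

lemma phiW_cont : Continuous (phiW G e h he hh hne hsub) := by
  unfold phiW
  apply continuous_if
  · intro f hf
    have hf2 : f.1 h = 1/2 :=
      frontier_le_subset_eq (real_cont_eval h) continuous_const hf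
    rw [phi1_half G e h he hh hne hsub f hf2, branch2X_half G e h he hh hne hsub f hf2]
    exact wedge_glue _ _
  · exact ((continuous_quot_mk.comp continuous_inl).comp
      (phi1_cont G e h he hh hne hsub)).continuousOn
  · have hsubset : closure {f : realization (matchingComplex G) | ¬ f.1 h ≤ 1/2} ⊆
        {f | 1/2 ≤ f.1 h} := by
      apply closure_minimal
      · intro f hf
        exact le_of_lt (lt_of_not_ge hf)
      · exact isClosed_le continuous_const (real_cont_eval h)
    apply ContinuousOn.mono _ hsubset
    intro f₀ hf₀
    by_cases h1 : f₀.1 h = 1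
    · have hmem : {f : realization (matchingComplex G) | 7/8 < f.1 h} ∈ nhds f₀ :=
        (isOpen_lt continuous_const (real_cont_eval h)).mem_nhds (by
          show (7:ℝ)/8 < f₀.1 h
          rw [h1]; norm_num)
      have hconst : ContinuousWithinAt
          (fun _ : realization (matchingComplex G) =>
            (Quot.mk _ (Sum.inr (Quot.mk _ (Sum.inr true))) :
              Wedge _ _ (basept0 G e h he hne) (baseptS G h)))
          {f : realization (matchingComplex G) | 1/2 ≤ f.1 h} f₀ := continuousWithinAt_const
      apply ContinuousWithinAt.congr_of_eventuallyEq hconst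
      · filter_upwards [mem_nhdsWithin_of_mem_nhds hmem] with f hf
        rw [branch2X_top G e h he hh hne hsub f hf]
      · rw [branch2X_top G e h he hh hne hsub f₀ (by rw [h1]; norm_num)]
    · have hlt : f₀.1 h < 1 := lt_of_le_of_ne (real_le_one f₀ h) h1
      have hpos : (0:ℝ) < f₀.1 h := by
        have : (1:ℝ)/2 ≤ f₀.1 h := hf₀
        linarith
      have hA : Nonempty (realization (matchingComplex (G.deleteEdges (edgeNbhdClosed G h)))) :=
        ⟨gPt G e h he hh hne hsub f₀ (ne_of_gt hpos) h1⟩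
      set g0 := Classical.choice hA with hg0
      set O : Set (realization (matchingComplex G)) := {f | 0 < f.1 h ∧ f.1 h < 1} with hO
      have hOopen : IsOpen O :=
        (isOpen_lt continuous_const (real_cont_eval h)).inter
          (isOpen_lt (real_cont_eval h) continuous_const)
      -- total auxiliary function
      set gTot : realization (matchingComplex G) →
          realization (matchingComplex (G.deleteEdges (edgeNbhdClosed G h))) := fun f =>
        if hc : f.1 h ≠ 0 ∧ f.1 h ≠ 1 then gPt G e h he hh hne hsub f hc.1 hc.2 else g0
        with hgTot
      have hgTotCA : ContinuousAt gTot f₀ := by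
        have hrest : Set.domRestrict O gTot = fun f : ↥O =>
            (⟨gVal h f.1.1, g_mem G e h he hh hne hsub f.1 (ne_of_gt f.2.1) (ne_of_lt f.2.2)⟩ :
              realization (matchingComplex (G.deleteEdges (edgeNbhdClosed G h)))) := by
          funext f
          simp only [Set.domRestrict, hgTot]
          rw [dif_pos ⟨ne_of_gt f.2.1, ne_of_lt f.2.2⟩]
          rfl
        have : ContinuousOn gTot O := by
          rw [continuousOn_iff_continuous_restrict, hrest]
          apply Continuous.subtype_mk
          apply continuous_pi
          intro a
          show Continuous fun f : ↥O => gVal h f.1.1 a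
          unfold gVal
          by_cases hah : a = h
          · simp only [if_pos hah]; exact continuous_const
          · simp only [if_neg hah]
            have hden : ∀ f : ↥O, 1 - f.1.1 h ≠ 0 := by
              intro f
              have := f.2.2
              intro hc; change f.1.1 h < 1 at this; linarith
            exact Continuous.div
              ((continuous_apply a).comp (continuous_subtype_val.comp continuous_subtype_val))
              (continuous_const.sub ((continuous_apply h).comp
                (continuous_subtype_val.comp continuous_subtype_val))) hden
        exact this.continuousAt (hOopen.mem_nhds ⟨hpos, hlt⟩)
      have houter : Continuous (fun z :
          realization (matchingComplex (G.deleteEdges (edgeNbhdClosed G h))) ×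
            Set.Icc (0:ℝ) 1 =>
          (Quot.mk _ (Sum.inr (Quot.mk _ (Sum.inl z))) :
            Wedge _ _ (basept0 G e h he hne) (baseptS G h))) :=
        continuous_quot_mk.comp (continuous_inr.comp (continuous_quot_mk.comp continuous_inl))
      have hproj : Continuous (fun f : realization (matchingComplex G) =>
          Set.projIcc (0:ℝ) 1 zero_le_one (4*f.1 h - 2)) :=
        continuous_projIcc.comp ((continuous_const.mul (real_cont_eval h)).sub continuous_const)
      have hFCA : ContinuousAt (fun f => (Quot.mk _ (Sum.inr (Quot.mk _ (Sum.inl (gTot f,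
          Set.projIcc 0 1 zero_le_one (4*f.1 h - 2))))) :
            Wedge _ _ (basept0 G e h he hne) (baseptS G h))) f₀ :=
        houter.continuousAt.comp (hgTotCA.prodMk hproj.continuousAt)
      apply ContinuousWithinAt.congr_of_eventuallyEq hFCA.continuousWithinAt
      · have hmem : {f : realization (matchingComplex G) | f.1 h < 1} ∈ nhds f₀ :=
          (isOpen_lt (real_cont_eval h) continuous_const).mem_nhds hlt
        have hmem2 : {f : realization (matchingComplex G) | 1/2 ≤ f.1 h} ∩
            {f | f.1 h < 1} ∈ nhdsWithin f₀ {f | 1/2 ≤ f.1 h} := by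
          apply Filter.inter_mem self_mem_nhdsWithin (mem_nhdsWithin_of_mem_nhds hmem)
        filter_upwards [hmem2] with f hf
        obtain ⟨hfS, hflt⟩ := hf
        have hfne0 : f.1 h ≠ 0 := by
          have : (1:ℝ)/2 ≤ f.1 h := hfS
          intro hz; rw [hz] at this; norm_num at this
        have hfne1 : f.1 h ≠ 1 := ne_of_lt hflt
        rw [branch2X_val G e h he hh hne hsub f hfne0 hfne1 hfS]
        congr 2
        simp only [hgTot]
        rw [dif_pos ⟨hfne0, hfne1⟩]
      · have hfne0 : f₀.1 h ≠ 0 := ne_of_gt hpos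
        rw [branch2X_val G e h he hh hne hsub f₀ hfne0 h1 hf₀]
        congr 2
        simp only [hgTot]
        rw [dif_pos ⟨hfne0, h1⟩]

end maps3

section homX
open scoped Classical
set_option linter.unusedSectionVars false
set_option maxHeartbeats 1000000
variable {V : Type*} (G : SimpleGraph V) (e h : Sym2 V)
variable (he : e ∈ G.edgeSet) (hh : h ∈ G.edgeSet) (hne : e ≠ h)
variable (hsub : edgeNbhdClosed G e ⊂ edgeNbhdClosed G h)

def mfun (t : ℝ) : ℝ := if t ≤ 1/2 then -(2*t) else min (8*t-5) 1

lemma mfun_cont : Continuous mfun := by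
  apply Continuous.if_le
  · exact (continuous_const.mul continuous_id).neg
  · exact ((continuous_const.mul continuous_id).sub continuous_const).min continuous_const
  · exact continuous_id
  · exact continuous_const
  · intro x hx
    rw [hx]; norm_num

lemma mfun_le_one (t : ℝ) (h0 : 0 ≤ t) : mfun t ≤ 1 := by
  unfold mfun
  split
  · linarith
  · exact min_le_right _ _

lemma neg_one_le_mfun (t : ℝ) (h1 : t ≤ 1) : -1 ≤ mfun t := by
  unfold mfun
  split
  · next hle => linarith
  · next hle =>
      push_neg at hle
      exact le_min (by linarith) (by norm_num)

lemma mfun_zero : mfun 0 = 0 := by unfold mfun; norm_num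

lemma mfun_one : mfun 1 = 1 := by unfold mfun; norm_num

lemma mfun_of_le (t : ℝ) (ht : t ≤ 1/2) : mfun t = -(2*t) := if_pos ht

lemma mfun_of_gt (t : ℝ) (ht : ¬ t ≤ 1/2) : mfun t = min (8*t-5) 1 := if_neg ht

def cfun (s t : ℝ) : ℝ := (1-s)*t + s*(mfun t)

lemma cfun_cont : Continuous fun p : ℝ × ℝ => cfun p.1 p.2 := by
  unfold cfun
  exact ((continuous_const.sub continuous_fst).mul continuous_snd).add
    (continuous_fst.mul (mfun_cont.comp continuous_snd))

lemma cfun_zero_left (t : ℝ) : cfun 0 t = t := by unfold cfun; ring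

lemma cfun_one_left (t : ℝ) : cfun 1 t = mfun t := by unfold cfun; ring

lemma cfun_t_zero (s : ℝ) : cfun s 0 = 0 := by unfold cfun; rw [mfun_zero]; ring

lemma cfun_t_one (s : ℝ) : cfun s 1 = 1 := by unfold cfun; rw [mfun_one]; ring

lemma abs_cfun_le (s t : ℝ) (hs0 : 0 ≤ s) (hs1 : s ≤ 1) (ht0 : 0 ≤ t) (ht1 : t ≤ 1) :
    |cfun s t| ≤ 1 := by
  have hm1 := mfun_le_one t ht0
  have hm2 := neg_one_le_mfun t ht1
  rw [abs_le]
  unfold cfun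
  constructor <;> nlinarith

def HXVal (s : ℝ) (f : Sym2 V → ℝ) : Sym2 V → ℝ := fun a =>
  if a = h then max (cfun s (f h)) 0
  else if a = e then max (-(cfun s (f h))) 0 + (1-|cfun s (f h)|) * (f e/(1-f h))
  else (1-|cfun s (f h)|) * (f a/(1-f h))

include he hh hne hsub in
lemma HX_mem (s : ℝ) (hs0 : 0 ≤ s) (hs1 : s ≤ 1) (f : realization (matchingComplex G)) :
    (∀ a, 0 ≤ HXVal e h s f.1 a) ∧ ∃ sf ∈ matchingComplex G,
      Function.support (HXVal e h s f.1) ⊆ ↑sf ∧ ∑ a ∈ sf, HXVal e h s f.1 a = 1 := by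
  have ht0 : 0 ≤ f.1 h := real_nonneg f h
  have ht1 : f.1 h ≤ 1 := real_le_one f h
  have habs : |cfun s (f.1 h)| ≤ 1 := abs_cfun_le s _ hs0 hs1 ht0 ht1
  have habs' : 1 - |cfun s (f.1 h)| ≥ 0 := by linarith
  constructor
  · intro a
    unfold HXVal
    try dsimp only
    by_cases hah : a = h
    · rw [if_pos hah]; exact le_max_right _ _
    · rw [if_neg hah]
      by_cases hae : a = e
      · rw [if_pos hae]
        exact add_nonneg (le_max_right _ _)
          (mul_nonneg habs' (div_nonneg (real_nonneg f e) (by linarith)))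
      · rw [if_neg hae]
        exact mul_nonneg habs' (div_nonneg (real_nonneg f a) (by linarith))
  · by_cases hth : f.1 h = 0
    · have hc : cfun s (f.1 h) = 0 := by rw [hth]; exact cfun_t_zero s
      have hfun : HXVal e h s f.1 = f.1 := by
        funext a
        unfold HXVal
        try dsimp only
        by_cases hah : a = h
        · rw [if_pos hah, hc, hah, hth]; norm_num
        · rw [if_neg hah, hc, hth]
          by_cases hae : a = e
          · rw [if_pos hae, hae]; norm_num
          · rw [if_neg hae]; norm_num
      rw [hfun]
      exact f.2.2
    · by_cases ht1' : f.1 h = 1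
      · have hc : cfun s (f.1 h) = 1 := by rw [ht1']; exact cfun_t_one s
        have hfun : HXVal e h s f.1 = (deltaHX G h hh).1 := by
          funext a
          have hd : (deltaHX G h hh).1 a = if a = h then 1 else 0 := by
            simp [deltaHX, deltaPt]
          unfold HXVal
          try dsimp only
          rw [hd]
          by_cases hah : a = h
          · rw [if_pos hah, if_pos hah, hc]; norm_num
          · rw [if_neg hah, if_neg hah, hc]
            by_cases hae : a = e
            · rw [if_pos hae]
              have hfe : f.1 e = 0 := fe_eq_zero he hh hne hsub f hth
              rw [hfe]; norm_num
            · rw [if_neg hae]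
              have hfa : f.1 a = 0 := ones_eq_zero he hh hne hsub f ht1' a hah
              rw [hfa]; norm_num
        rw [hfun]
        exact (deltaHX G h hh).2.2
      · -- 0 < t < 1
        have htpos : 0 < f.1 h := lt_of_le_of_ne ht0 (Ne.symm hth)
        have htlt : f.1 h < 1 := lt_of_le_of_ne ht1 ht1'
        have hden : (0:ℝ) < 1 - f.1 h := by linarith
        obtain ⟨sf, hs, hsupp, hsum⟩ := exists_good_face G f
        have hhs : h ∈ sf := by rw [← Finset.mem_coe, hsupp]; exact hth
        have hfe : f.1 e = 0 := fe_eq_zero he hh hne hsub f hth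
        have hes : e ∉ sf := by
          intro hmem
          have : e ∈ Function.support f.1 := by rw [← hsupp]; exact Finset.mem_coe.2 hmem
          exact this hfe
        have hsum_erase : ∑ a ∈ sf.erase h, f.1 a = 1 - f.1 h := by
          have h2 := Finset.add_sum_erase sf f.1 hhs
          rw [hsum] at h2; linarith
        have hterm : ∀ a ∈ sf.erase h,
            HXVal e h s f.1 a = f.1 a * ((1-|cfun s (f.1 h)|)/(1-f.1 h)) := by
          intro a ha
          have hah : a ≠ h := (Finset.mem_erase.1 ha).1
          have hae : a ≠ e := fun hc => hes (hc ▸ Finset.mem_of_mem_erase ha)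
          unfold HXVal
          try dsimp only
          rw [if_neg hah, if_neg hae]
          ring
        by_cases hc0 : 0 ≤ cfun s (f.1 h)
        · refine ⟨sf, hs, ?_, ?_⟩
          · intro a ha
            simp only [Function.mem_support] at ha
            unfold HXVal at ha
            try dsimp only at ha
            by_cases hah : a = h
            · rw [hah]; exact Finset.mem_coe.2 hhs
            · rw [if_neg hah] at ha
              by_cases hae : a = e
              · rw [if_pos hae, hfe, max_eq_right (by linarith : -(cfun s (f.1 h)) ≤ 0)] at ha
                norm_num at ha
              · rw [if_neg hae] at ha
                have hfa : f.1 a ≠ 0 := by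
                  intro hz; rw [hz] at ha; simp at ha
                rw [hsupp]; exact hfa
          · rw [← Finset.add_sum_erase sf _ hhs]
            have hvalH : HXVal e h s f.1 h = cfun s (f.1 h) := by
              unfold HXVal
              try dsimp only
              rw [if_pos rfl]
              exact max_eq_left hc0
            rw [hvalH, Finset.sum_congr rfl hterm, ← Finset.sum_mul, hsum_erase,
              abs_of_nonneg hc0]
            try field_simp
            ring
        · refine ⟨insert e (sf.erase h),
            mc_del_subset G {h} (insert_e_mem_mc0 he hh hne hsub (erase_mem_mcA hh hs hhs)),
            ?_, ?_⟩
          · intro a ha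
            simp only [Function.mem_support] at ha
            unfold HXVal at ha
            try dsimp only at ha
            by_cases hah : a = h
            · rw [if_pos hah, max_eq_right (le_of_lt (lt_of_not_ge hc0))] at ha
              exact absurd rfl ha
            · rw [if_neg hah] at ha
              by_cases hae : a = e
              · rw [Finset.coe_insert]; exact Set.mem_insert_iff.2 (Or.inl hae)
              · rw [if_neg hae] at ha
                have hfa : f.1 a ≠ 0 := by
                  intro hz; rw [hz] at ha; simp at ha
                have has : a ∈ sf := by rw [← Finset.mem_coe, hsupp]; exact hfa
                rw [Finset.coe_insert]
                exact Set.mem_insert_iff.2 (Or.inr (Finset.mem_coe.2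
                  (Finset.mem_erase.2 ⟨hah, has⟩)))
          · have hesE : e ∉ sf.erase h := fun hmem => hes (Finset.mem_of_mem_erase hmem)
            rw [Finset.sum_insert hesE]
            have hvalE : HXVal e h s f.1 e = -(cfun s (f.1 h)) := by
              unfold HXVal
              try dsimp only
              rw [if_neg hne, if_pos rfl, hfe,
                max_eq_left (by linarith [lt_of_not_ge hc0] : (0:ℝ) ≤ -(cfun s (f.1 h)))]
              norm_num
            rw [hvalE, Finset.sum_congr rfl hterm, ← Finset.sum_mul, hsum_erase,
              abs_of_neg (lt_of_not_ge hc0)]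
            try field_simp
            try ring

def HXPt (p : unitInterval × realization (matchingComplex G)) :
    realization (matchingComplex G) :=
  ⟨HXVal e h p.1.1 p.2.1, HX_mem G e h he hh hne hsub p.1.1 p.1.2.1 p.1.2.2 p.2⟩

lemma HX_cont : Continuous (HXPt G e h he hh hne hsub) := by
  apply Continuous.subtype_mk
  apply continuous_pi
  intro a
  have hcc : Continuous fun p : unitInterval × realization (matchingComplex G) =>
      cfun p.1.1 (p.2.1 h) :=
    cfun_cont.comp ((continuous_subtype_val.comp continuous_fst).prodMk
      ((real_cont_eval h).comp continuous_snd))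
  have hkey : ∀ b : Sym2 V, b ≠ h →
      Continuous fun p : unitInterval × realization (matchingComplex G) =>
        (1-|cfun p.1.1 (p.2.1 h)|) * (p.2.1 b/(1-p.2.1 h)) := by
    intro b hbh
    rw [continuous_iff_continuousAt]
    intro p₀
    by_cases hp1 : p₀.2.1 h = 1
    · have hF0 : (fun p : unitInterval × realization (matchingComplex G) =>
          (1-|cfun p.1.1 (p.2.1 h)|) * (p.2.1 b/(1-p.2.1 h))) p₀ = 0 := by
        show (1-|cfun p₀.1.1 (p₀.2.1 h)|) * (p₀.2.1 b/(1-p₀.2.1 h)) = 0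
        rw [hp1, cfun_t_one]
        norm_num
      unfold ContinuousAt
      rw [hF0]
      apply squeeze_zero (g := fun p : unitInterval × realization (matchingComplex G) =>
        1-|cfun p.1.1 (p.2.1 h)|)
      · intro p
        apply mul_nonneg
        · have := abs_cfun_le p.1.1 (p.2.1 h) p.1.2.1 p.1.2.2 (real_nonneg p.2 h)
            (real_le_one p.2 h)
          linarith
        · exact div_nonneg (real_nonneg p.2 b) (by linarith [real_le_one p.2 h])
      · intro p
        apply mul_le_of_le_one_right
        · have := abs_cfun_le p.1.1 (p.2.1 h) p.1.2.1 p.1.2.2 (real_nonneg p.2 h)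
            (real_le_one p.2 h)
          linarith
        · by_cases hp : p.2.1 h = 1
          · rw [hp]; norm_num
          · apply div_le_one_of_le₀
            · have := real_pair_le p.2 hbh
              linarith
            · linarith [real_le_one p.2 h]
      · have hcont : Continuous fun p : unitInterval × realization (matchingComplex G) =>
            1-|cfun p.1.1 (p.2.1 h)| := continuous_const.sub hcc.abs
        have := hcont.continuousAt (x := p₀)
        unfold ContinuousAt at this
        have hG0 : (fun p : unitInterval × realization (matchingComplex G) =>
            1-|cfun p.1.1 (p.2.1 h)|) p₀ = 0 := by
          show 1-|cfun p₀.1.1 (p₀.2.1 h)| = 0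
          rw [hp1, cfun_t_one]; norm_num
        rwa [hG0] at this
    · apply ContinuousAt.mul
      · exact (continuous_const.sub hcc.abs).continuousAt
      · apply ContinuousAt.div
        · exact ((real_cont_eval b).comp continuous_snd).continuousAt
        · exact (continuous_const.sub ((real_cont_eval h).comp continuous_snd)).continuousAt
        · intro hz
          apply hp1
          linarith [sub_eq_zero.1 hz]
  show Continuous fun p : unitInterval × realization (matchingComplex G) =>
    HXVal e h p.1.1 p.2.1 a
  unfold HXVal
  try dsimp only
  by_cases hah : a = h
  · simp only [if_pos hah]
    exact hcc.max continuous_const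
  · simp only [if_neg hah]
    by_cases hae : a = e
    · simp only [if_pos hae]
      exact (hcc.neg.max continuous_const).add (hae ▸ hkey e hne)
    · simp only [if_neg hae]
      exact hkey a hah

lemma HX_zero (f : realization (matchingComplex G)) :
    HXPt G e h he hh hne hsub (0, f) = f := by
  apply Subtype.ext
  funext a
  show HXVal e h ((0 : unitInterval) : ℝ) f.1 a = f.1 a
  have hc : cfun ((0 : unitInterval) : ℝ) (f.1 h) = f.1 h := by
    rw [show ((0 : unitInterval) : ℝ) = 0 from rfl, cfun_zero_left]
  have ht0 : 0 ≤ f.1 h := real_nonneg f h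
  unfold HXVal
  try dsimp only
  rw [hc]
  by_cases hah : a = h
  · rw [if_pos hah, hah, max_eq_left ht0]
  · rw [if_neg hah]
    have habs : |f.1 h| = f.1 h := abs_of_nonneg ht0
    by_cases ht1 : f.1 h = 1
    · have hfa : f.1 a = 0 := ones_eq_zero he hh hne hsub f ht1 a hah
      by_cases hae : a = e
      · subst hae
        rw [if_pos rfl, habs, ht1, hfa]
        norm_num
      · rw [if_neg hae, habs, ht1, hfa]
        norm_num
    · have hden : (1 - f.1 h) ≠ 0 := by
        intro hz
        exact ht1 (by linarith [sub_eq_zero.1 hz])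
      by_cases hae : a = e
      · rw [if_pos hae, habs, max_eq_right (by linarith : -(f.1 h) ≤ 0), hae]
        field_simp
        ring
      · rw [if_neg hae, habs]
        field_simp

lemma HX_one (f : realization (matchingComplex G)) :
    HXPt G e h he hh hne hsub (1, f) =
      psiW G e h he hh hne hsub (phiW G e h he hh hne hsub f) := by
  have ht0 : 0 ≤ f.1 h := real_nonneg f h
  have ht1 : f.1 h ≤ 1 := real_le_one f h
  have hc : cfun ((1 : unitInterval) : ℝ) (f.1 h) = mfun (f.1 h) := by
    rw [show ((1 : unitInterval) : ℝ) = 1 from rfl, cfun_one_left]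
  by_cases htle : f.1 h ≤ 1/2
  · erw [phiW, if_pos htle]
    show HXPt G e h he hh hne hsub (1, f) = incl0 G h (phi1 G e h he hh hne hsub f)
    apply Subtype.ext
    funext a
    show HXVal e h ((1 : unitInterval) : ℝ) f.1 a = phi1Val e h f.1 a
    have hm : mfun (f.1 h) = -(2*f.1 h) := mfun_of_le _ htle
    have hmin : min (f.1 h) (1/2) = f.1 h := min_eq_left htle
    unfold HXVal phi1Val
    try dsimp only
    rw [hc, hm]
    by_cases hah : a = h
    · rw [if_pos hah, if_pos hah, max_eq_right (by linarith : -(2*f.1 h) ≤ 0)]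
    · rw [if_neg hah, if_neg hah, hmin]
      have habs : |(-(2*f.1 h))| = 2*f.1 h := by
        rw [abs_neg, abs_of_nonneg (by linarith : (0:ℝ) ≤ 2*f.1 h)]
      by_cases hae : a = e
      · rw [if_pos hae, if_pos hae, habs, neg_neg,
          max_eq_left (by linarith : (0:ℝ) ≤ 2*f.1 h)]
      · rw [if_neg hae, if_neg hae, habs]
  · erw [phiW, if_neg htle]
    have hS : 1/2 ≤ f.1 h := le_of_lt (lt_of_not_ge htle)
    have h0 : f.1 h ≠ 0 := by intro hz; rw [hz] at hS; norm_num at hS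
    have hfe : f.1 e = 0 := fe_eq_zero he hh hne hsub f h0
    have hm : mfun (f.1 h) = min (8*f.1 h-5) 1 := mfun_of_gt _ htle
    by_cases ht1' : f.1 h = 1
    · rw [show branch2X G e h he hh hne hsub f = Quot.mk _ (Sum.inr true) by
        unfold branch2X; erw [dif_pos hS, dif_pos ht1']]
      show HXPt G e h he hh hne hsub (1, f) = deltaHX G h hh
      apply Subtype.ext
      funext a
      have hd : (deltaHX G h hh).1 a = if a = h then 1 else 0 := by
        simp [deltaHX, deltaPt]
      show HXVal e h ((1 : unitInterval) : ℝ) f.1 a = _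
      rw [hd]
      unfold HXVal
      try dsimp only
      rw [hc, ht1', mfun_one]
      by_cases hah : a = h
      · rw [if_pos hah, if_pos hah]; norm_num
      · rw [if_neg hah, if_neg hah]
        by_cases hae : a = e
        · rw [if_pos hae, hfe]; norm_num
        · rw [if_neg hae]; norm_num
    · rw [branch2X_val G e h he hh hne hsub f h0 ht1' hS]
      show HXPt G e h he hh hne hsub (1, f) =
        psiPt G e h he hh hne hsub (gPt G e h he hh hne hsub f h0 ht1') _
      apply Subtype.ext
      funext a
      show HXVal e h ((1 : unitInterval) : ℝ) f.1 a =
        psiVal e h (gVal h f.1) (↑(Set.projIcc (0:ℝ) 1 zero_le_one (4*f.1 h - 2))) a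
      have hu : (↑(Set.projIcc (0:ℝ) 1 zero_le_one (4*f.1 h - 2)) : ℝ) =
          min 1 (4*f.1 h - 2) := by
        rw [Set.coe_projIcc, max_eq_right (le_min (by norm_num) (by linarith))]
      rw [hu]
      unfold HXVal psiVal gVal
      try dsimp only
      rw [hc, hm]
      by_cases hae : a = e
      · have hah : ¬ a = h := by rw [hae]; exact hne
        simp only [if_pos hae, if_neg hah, hfe, zero_div, mul_zero, add_zero]
        by_cases h34 : 8*f.1 h - 5 ≤ 1
        · rw [min_eq_left h34, min_eq_right (by linarith : 4*f.1 h - 2 ≤ 1),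
            show 1-2*(4*f.1 h-2) = -(8*f.1 h-5) from by ring]
        · rw [min_eq_right (le_of_not_ge h34),
            min_eq_left (by push_neg at h34; linarith : (1:ℝ) ≤ 4*f.1 h - 2)]
          norm_num
      · by_cases hah : a = h
        · simp only [if_neg hae, if_pos hah]
          by_cases h34 : 8*f.1 h - 5 ≤ 1
          · rw [min_eq_left h34, min_eq_right (by linarith : 4*f.1 h - 2 ≤ 1),
              show 2*(4*f.1 h-2)-1 = 8*f.1 h-5 from by ring]
          · rw [min_eq_right (le_of_not_ge h34),
              min_eq_left (by push_neg at h34; linarith : (1:ℝ) ≤ 4*f.1 h - 2)]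
            norm_num
        · simp only [if_neg hae, if_neg hah]
          by_cases h34 : 8*f.1 h - 5 ≤ 1
          · rw [min_eq_left h34, min_eq_right (by linarith : 4*f.1 h - 2 ≤ 1),
              show 2*(4*f.1 h-2)-1 = 8*f.1 h-5 from by ring]
          · rw [min_eq_right (le_of_not_ge h34),
              min_eq_left (by push_neg at h34; linarith : (1:ℝ) ≤ 4*f.1 h - 2)]
            norm_num

end homX

section homW
open scoped Classical
set_option linter.unusedSectionVars false
set_option maxHeartbeats 1600000
variable {V : Type*} (G : SimpleGraph V) (e h : Sym2 V)
variable (he : e ∈ G.edgeSet) (hh : h ∈ G.edgeSet) (hne : e ≠ h)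
variable (hsub : edgeNbhdClosed G e ⊂ edgeNbhdClosed G h)

def bb1 (s : ℝ) : ℝ := (1-s)/2
def bb2 (s : ℝ) : ℝ := 3*(1-s)/4
def bb3 (s : ℝ) : ℝ := 7/8 + s/8

lemma bb3_sub_bb2 (s : ℝ) (hs : 0 ≤ s) : bb3 s - bb2 s ≠ 0 := by
  unfold bb2 bb3; intro hc; nlinarith

lemma conePt_cont : Continuous fun p :
    realization (matchingComplex (G.deleteEdges (edgeNbhdClosed G h))) × ℝ =>
    conePt G e h he hh hne hsub p.1 p.2 := by
  apply Continuous.subtype_mk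
  apply continuous_pi
  intro a
  have hcl : Continuous fun p :
      realization (matchingComplex (G.deleteEdges (edgeNbhdClosed G h))) × ℝ =>
      max (min p.2 1) 0 := (continuous_snd.min continuous_const).max continuous_const
  show Continuous fun p : realization (matchingComplex (G.deleteEdges (edgeNbhdClosed G h))) × ℝ => coneVal e h p.1.1 p.2 a
  unfold coneVal
  by_cases hae : a = e
  · simp only [if_pos hae]
    exact continuous_const.sub hcl
  · simp only [if_neg hae]
    by_cases hah : a = h
    · simp only [if_pos hah]
      exact continuous_const
    · simp only [if_neg hah]
      exact hcl.mul ((continuous_apply a).comp (continuous_subtype_val.comp continuous_fst))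

lemma conePt_zero (g : realization (matchingComplex (G.deleteEdges (edgeNbhdClosed G h)))) :
    conePt G e h he hh hne hsub g 0 = basept0 G e h he hne := by
  apply Subtype.ext
  funext a
  have hb : (basept0 G e h he hne).1 a = if a = e then 1 else 0 := by
    simp [basept0, deltaPt]
  show coneVal e h g.1 0 a = _
  rw [hb]
  unfold coneVal
  have hcl : max (min (0:ℝ) 1) 0 = 0 := by norm_num
  rw [hcl]
  by_cases hae : a = e
  · rw [if_pos hae, if_pos hae]; norm_num
  · rw [if_neg hae, if_neg hae]
    by_cases hah : a = h
    · rw [if_pos hah]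
    · rw [if_neg hah]; norm_num

/-- the underlying map of the homotopy on the cylinder of the suspension -/
def HcylW (q : (realization (matchingComplex (G.deleteEdges (edgeNbhdClosed G h))) ×
    Set.Icc (0:ℝ) 1) × unitInterval) :
    Wedge (realization (matchingComplex (G.deleteEdges {h})))
      (Susp (realization (matchingComplex (G.deleteEdges (edgeNbhdClosed G h)))))
      (basept0 G e h he hne) (baseptS G h) :=
  if (q.1.2 : ℝ) ≤ bb1 q.2 then
    Quot.mk _ (Sum.inl (conePt G e h he hh hne hsub q.1.1 (2*(q.1.2 : ℝ))))
  else if (q.1.2 : ℝ) ≤ bb2 q.2 then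
    Quot.mk _ (Sum.inl (conePt G e h he hh hne hsub q.1.1 (3*(1-(q.2:ℝ)) - 4*(q.1.2 : ℝ))))
  else if (q.1.2 : ℝ) ≤ bb3 q.2 then
    Quot.mk _ (Sum.inr (Quot.mk _ (Sum.inl (q.1.1,
      Set.projIcc 0 1 zero_le_one (((q.1.2 : ℝ) - bb2 q.2)/(bb3 q.2 - bb2 q.2))))))
  else Quot.mk _ (Sum.inr (Quot.mk _ (Sum.inr true)))

lemma HcylW_cont : Continuous (HcylW G e h he hh hne hsub) := by
  have hu : Continuous fun q : (realization (matchingComplex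
      (G.deleteEdges (edgeNbhdClosed G h))) × Set.Icc (0:ℝ) 1) × unitInterval => (q.1.2 : ℝ) :=
    continuous_subtype_val.comp (continuous_snd.comp continuous_fst)
  have hs : Continuous fun q : (realization (matchingComplex
      (G.deleteEdges (edgeNbhdClosed G h))) × Set.Icc (0:ℝ) 1) × unitInterval => (q.2 : ℝ) :=
    continuous_subtype_val.comp continuous_snd
  have hg : Continuous fun q : (realization (matchingComplex
      (G.deleteEdges (edgeNbhdClosed G h))) × Set.Icc (0:ℝ) 1) × unitInterval => q.1.1 :=
    continuous_fst.comp continuous_fst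
  have hb1 : Continuous fun q : (realization (matchingComplex
      (G.deleteEdges (edgeNbhdClosed G h))) × Set.Icc (0:ℝ) 1) × unitInterval => bb1 (q.2 : ℝ) := by
    unfold bb1; exact (continuous_const.sub hs).div_const _
  have hb2 : Continuous fun q : (realization (matchingComplex
      (G.deleteEdges (edgeNbhdClosed G h))) × Set.Icc (0:ℝ) 1) × unitInterval => bb2 (q.2 : ℝ) := by
    unfold bb2; exact (continuous_const.mul (continuous_const.sub hs)).div_const _
  have hb3 : Continuous fun q : (realization (matchingComplex
      (G.deleteEdges (edgeNbhdClosed G h))) × Set.Icc (0:ℝ) 1) × unitInterval => bb3 (q.2 : ℝ) := by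
    unfold bb3; exact continuous_const.add (hs.div_const _)
  have hWmk : Continuous fun p : realization (matchingComplex (G.deleteEdges {h})) =>
      (Quot.mk _ (Sum.inl p) : Wedge _ _ (basept0 G e h he hne) (baseptS G h)) :=
    continuous_quot_mk.comp continuous_inl
  have hWmk2 : Continuous fun z : realization (matchingComplex
      (G.deleteEdges (edgeNbhdClosed G h))) × Set.Icc (0:ℝ) 1 =>
      (Quot.mk _ (Sum.inr (Quot.mk _ (Sum.inl z))) :
        Wedge _ _ (basept0 G e h he hne) (baseptS G h)) :=
    continuous_quot_mk.comp (continuous_inr.comp (continuous_quot_mk.comp continuous_inl))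
  -- innermost if
  have h3 : Continuous fun q : (realization (matchingComplex
      (G.deleteEdges (edgeNbhdClosed G h))) × Set.Icc (0:ℝ) 1) × unitInterval =>
      if (q.1.2 : ℝ) ≤ bb3 q.2 then
        (Quot.mk _ (Sum.inr (Quot.mk _ (Sum.inl (q.1.1,
          Set.projIcc 0 1 zero_le_one (((q.1.2 : ℝ) - bb2 q.2)/(bb3 q.2 - bb2 q.2)))))) :
            Wedge _ _ (basept0 G e h he hne) (baseptS G h))
      else Quot.mk _ (Sum.inr (Quot.mk _ (Sum.inr true))) := by
    apply Continuous.if_le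
    · exact hWmk2.comp (hg.prodMk (continuous_projIcc.comp
        ((hu.sub hb2).div (hb3.sub hb2) (fun q => bb3_sub_bb2 _ q.2.2.1))))
    · exact continuous_const
    · exact hu
    · exact hb3
    · intro q hq
      have harg : ((q.1.2 : ℝ) - bb2 q.2)/(bb3 q.2 - bb2 q.2) = 1 := by
        rw [hq, div_self (bb3_sub_bb2 _ q.2.2.1)]
      rw [harg]
      rw [susp_mk_one _ _ (by rw [Set.coe_projIcc]; norm_num)]
  -- middle if
  have h2 : Continuous fun q : (realization (matchingComplex
      (G.deleteEdges (edgeNbhdClosed G h))) × Set.Icc (0:ℝ) 1) × unitInterval =>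
      if (q.1.2 : ℝ) ≤ bb2 q.2 then
        (Quot.mk _ (Sum.inl (conePt G e h he hh hne hsub q.1.1
          (3*(1-(q.2:ℝ)) - 4*(q.1.2 : ℝ)))) :
            Wedge _ _ (basept0 G e h he hne) (baseptS G h))
      else if (q.1.2 : ℝ) ≤ bb3 q.2 then
        Quot.mk _ (Sum.inr (Quot.mk _ (Sum.inl (q.1.1,
          Set.projIcc 0 1 zero_le_one (((q.1.2 : ℝ) - bb2 q.2)/(bb3 q.2 - bb2 q.2))))))
      else Quot.mk _ (Sum.inr (Quot.mk _ (Sum.inr true))) := by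
    apply Continuous.if_le
    · exact hWmk.comp ((conePt_cont G e h he hh hne hsub).comp
        (hg.prodMk ((continuous_const.mul (continuous_const.sub hs)).sub
          (continuous_const.mul hu))))
    · exact h3
    · exact hu
    · exact hb2
    · intro q hq
      have hle3 : (q.1.2 : ℝ) ≤ bb3 q.2 := by
        rw [hq]
        unfold bb2 bb3
        have := q.2.2.1
        have := q.2.2.2
        nlinarith
      rw [if_pos hle3]
      have harg : 3*(1-(q.2:ℝ)) - 4*(q.1.2 : ℝ) = 0 := by
        rw [hq]; unfold bb2; ring
      have harg2 : ((q.1.2 : ℝ) - bb2 q.2)/(bb3 q.2 - bb2 q.2) = 0 := by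
        rw [hq]; simp
      rw [harg, harg2, conePt_zero G e h he hh hne hsub]
      rw [susp_mk_zero _ _ (by rw [Set.coe_projIcc]; norm_num)]
      exact wedge_glue _ _
  apply Continuous.if_le
  · exact hWmk.comp ((conePt_cont G e h he hh hne hsub).comp
      (hg.prodMk (continuous_const.mul hu)))
  · exact h2
  · exact hu
  · exact hb1
  · intro q hq
    have hle2 : (q.1.2 : ℝ) ≤ bb2 q.2 := by
      rw [hq]
      unfold bb1 bb2
      have := q.2.2.2
      nlinarith
    erw [if_pos hle2]
    have harg : 3*(1-(q.2:ℝ)) - 4*(q.1.2 : ℝ) = 2*(q.1.2:ℝ) := by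
      rw [hq]; unfold bb1; ring
    rw [harg]

def HcylC : C((realization (matchingComplex (G.deleteEdges (edgeNbhdClosed G h))) ×
    Set.Icc (0:ℝ) 1) × unitInterval,
    Wedge (realization (matchingComplex (G.deleteEdges {h})))
      (Susp (realization (matchingComplex (G.deleteEdges (edgeNbhdClosed G h)))))
      (basept0 G e h he hne) (baseptS G h)) :=
  ⟨HcylW G e h he hh hne hsub, HcylW_cont G e h he hh hne hsub⟩

def HSuspFun : (realization (matchingComplex (G.deleteEdges (edgeNbhdClosed G h))) ×
    Set.Icc (0:ℝ) 1) ⊕ Bool →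
    C(unitInterval, Wedge (realization (matchingComplex (G.deleteEdges {h})))
      (Susp (realization (matchingComplex (G.deleteEdges (edgeNbhdClosed G h)))))
      (basept0 G e h he hne) (baseptS G h)) :=
  Sum.elim (fun p => (ContinuousMap.curry (HcylC G e h he hh hne hsub)) p)
    (fun b => cond b
      (ContinuousMap.const _ (Quot.mk _ (Sum.inr (Quot.mk _ (Sum.inr true)))))
      (ContinuousMap.const _ (Quot.mk _ (Sum.inl (basept0 G e h he hne)))))

lemma HcylW_u_zero (g : realization (matchingComplex (G.deleteEdges (edgeNbhdClosed G h))))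
    (u : Set.Icc (0:ℝ) 1) (hu : (u:ℝ) = 0) (s : unitInterval) :
    HcylW G e h he hh hne hsub ((g, u), s) =
      Quot.mk _ (Sum.inl (basept0 G e h he hne)) := by
  unfold HcylW
  have hb1 : (0:ℝ) ≤ bb1 s := by
    unfold bb1
    have := s.2.2
    linarith
  erw [if_pos (by rw [hu]; exact hb1)]
  rw [hu]
  norm_num
  rw [conePt_zero G e h he hh hne hsub]

lemma HcylW_u_one (g : realization (matchingComplex (G.deleteEdges (edgeNbhdClosed G h))))
    (u : Set.Icc (0:ℝ) 1) (hu : (u:ℝ) = 1) (s : unitInterval) :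
    HcylW G e h he hh hne hsub ((g, u), s) =
      Quot.mk _ (Sum.inr (Quot.mk _ (Sum.inr true))) := by
  unfold HcylW
  have hs0 := s.2.1
  have hs1 := s.2.2
  erw [if_neg (by rw [hu]; unfold bb1; intro hc; linarith)]
  erw [if_neg (by rw [hu]; unfold bb2; intro hc; linarith)]
  by_cases h3 : (u:ℝ) ≤ bb3 s
  · erw [if_pos h3]
    have hseq : (s:ℝ) = 1 := by
      rw [hu] at h3
      unfold bb3 at h3
      linarith
    have harg : ((u : ℝ) - bb2 s)/(bb3 s - bb2 s) = 1 := by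
      rw [hu, hseq]
      unfold bb2 bb3
      norm_num
    rw [harg]
    rw [susp_mk_one _ _ (by rw [Set.coe_projIcc]; norm_num)]
    rfl
  · erw [if_neg h3]
    rfl

def HSusp : Susp (realization (matchingComplex (G.deleteEdges (edgeNbhdClosed G h)))) →
    C(unitInterval, Wedge (realization (matchingComplex (G.deleteEdges {h})))
      (Susp (realization (matchingComplex (G.deleteEdges (edgeNbhdClosed G h)))))
      (basept0 G e h he hne) (baseptS G h)) :=
  Quot.lift (HSuspFun G e h he hh hne hsub) (by
    rintro (p | b) (q | c) hpq
    · exact hpq.elim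
    · rcases hpq with ⟨h0, rfl⟩ | ⟨h1, rfl⟩
      · apply ContinuousMap.ext
        intro s
        show HcylW G e h he hh hne hsub ((p.1, p.2), s) = _
        rw [HcylW_u_zero G e h he hh hne hsub p.1 p.2 h0 s]
        rfl
      · apply ContinuousMap.ext
        intro s
        show HcylW G e h he hh hne hsub ((p.1, p.2), s) = _
        rw [HcylW_u_one G e h he hh hne hsub p.1 p.2 h1 s]
        rfl
    · exact hpq.elim
    · exact hpq.elim)

lemma HSusp_cont : Continuous (HSusp G e h he hh hne hsub) := by
  apply continuous_quot_lift
  apply Continuous.sumElim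
  · exact (ContinuousMap.curry (HcylC G e h he hh hne hsub)).continuous
  · exact continuous_of_discreteTopology

def HWfun : Wedge (realization (matchingComplex (G.deleteEdges {h})))
      (Susp (realization (matchingComplex (G.deleteEdges (edgeNbhdClosed G h)))))
      (basept0 G e h he hne) (baseptS G h) →
    C(unitInterval, Wedge (realization (matchingComplex (G.deleteEdges {h})))
      (Susp (realization (matchingComplex (G.deleteEdges (edgeNbhdClosed G h)))))
      (basept0 G e h he hne) (baseptS G h)) :=
  Quot.lift (Sum.elim
    (fun f₀ => ContinuousMap.const _ (Quot.mk _ (Sum.inl f₀)))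
    (HSusp G e h he hh hne hsub)) (by
      rintro a b ⟨rfl, rfl⟩
      show ContinuousMap.const _ _ = HSusp G e h he hh hne hsub (baseptS G h)
      rfl)

lemma HWfun_cont : Continuous (HWfun G e h he hh hne hsub) := by
  apply continuous_quot_lift
  apply Continuous.sumElim
  · have hcont : Continuous fun p : realization (matchingComplex (G.deleteEdges {h})) ×
        unitInterval => (Quot.mk _ (Sum.inl p.1) :
          Wedge _ _ (basept0 G e h he hne) (baseptS G h)) :=
      (continuous_quot_mk.comp continuous_inl).comp continuous_fst
    have := (ContinuousMap.curry ⟨_, hcont⟩).continuous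
    exact this
  · exact HSusp_cont G e h he hh hne hsub

end homW

section homW2
open scoped Classical
set_option linter.unusedSectionVars false
set_option maxHeartbeats 1600000
variable {V : Type*} (G : SimpleGraph V) (e h : Sym2 V)
variable (he : e ∈ G.edgeSet) (hh : h ∈ G.edgeSet) (hne : e ≠ h)
variable (hsub : edgeNbhdClosed G e ⊂ edgeNbhdClosed G h)

lemma psiPt_h (g : realization (matchingComplex (G.deleteEdges (edgeNbhdClosed G h))))
    (u : Set.Icc (0:ℝ) 1) :
    (psiPt G e h he hh hne hsub g u).1 h = max (2*(u:ℝ)-1) 0 := by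
  show psiVal e h g.1 (u:ℝ) h = _
  unfold psiVal
  rw [if_neg (Ne.symm hne), if_pos rfl]

lemma psiPt_e (g : realization (matchingComplex (G.deleteEdges (edgeNbhdClosed G h))))
    (u : Set.Icc (0:ℝ) 1) :
    (psiPt G e h he hh hne hsub g u).1 e = max (1-2*(u:ℝ)) 0 := by
  show psiVal e h g.1 (u:ℝ) e = _
  unfold psiVal
  rw [if_pos rfl]

lemma psiPt_other (g : realization (matchingComplex (G.deleteEdges (edgeNbhdClosed G h))))
    (u : Set.Icc (0:ℝ) 1) (a : Sym2 V) (hae : a ≠ e) (hah : a ≠ h) :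
    (psiPt G e h he hh hne hsub g u).1 a = (1-|2*(u:ℝ)-1|) * g.1 a := by
  show psiVal e h g.1 (u:ℝ) a = _
  unfold psiVal
  rw [if_neg hae, if_neg hah]

lemma gPt_psiPt (g : realization (matchingComplex (G.deleteEdges (edgeNbhdClosed G h))))
    (u : Set.Icc (0:ℝ) 1) (hu : 1/2 < (u:ℝ)) (hu1 : (u:ℝ) < 1)
    (h0 : (psiPt G e h he hh hne hsub g u).1 h ≠ 0)
    (h1 : (psiPt G e h he hh hne hsub g u).1 h ≠ 1) :
    gPt G e h he hh hne hsub (psiPt G e h he hh hne hsub g u) h0 h1 = g := by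
  apply Subtype.ext
  funext a
  show gVal h (psiPt G e h he hh hne hsub g u).1 a = g.1 a
  have hth : (psiPt G e h he hh hne hsub g u).1 h = 2*(u:ℝ)-1 := by
    rw [psiPt_h]; exact max_eq_left (by linarith)
  unfold gVal
  try dsimp only
  by_cases hah : a = h
  · rw [if_pos hah, hah]
    exact (a_h_eq_zero hh g).symm
  · rw [if_neg hah, hth]
    have hden : 1-(2*(u:ℝ)-1) ≠ 0 := by intro hc; linarith
    by_cases hae : a = e
    · rw [hae, psiPt_e, max_eq_right (by linarith : 1-2*(u:ℝ) ≤ 0), zero_div]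
      exact (a_e_eq_zero he hsub g).symm
    · rw [psiPt_other G e h he hh hne hsub g u a hae hah,
        abs_of_nonneg (by linarith : (0:ℝ) ≤ 2*(u:ℝ)-1)]
      field_simp

lemma phipsi_low (g : realization (matchingComplex (G.deleteEdges (edgeNbhdClosed G h))))
    (u : Set.Icc (0:ℝ) 1) (hu : (u:ℝ) ≤ 1/2) :
    phiW G e h he hh hne hsub (psiPt G e h he hh hne hsub g u) =
      Quot.mk _ (Sum.inl (conePt G e h he hh hne hsub g (2*(u:ℝ)))) := by
  have hu0 := u.2.1
  have hth : (psiPt G e h he hh hne hsub g u).1 h = 0 := by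
    rw [psiPt_h]; exact max_eq_right (by linarith)
  unfold phiW
  erw [if_pos (by rw [hth]; norm_num)]
  have heq : phi1 G e h he hh hne hsub (psiPt G e h he hh hne hsub g u) =
      conePt G e h he hh hne hsub g (2*(u:ℝ)) := by
    apply Subtype.ext
    funext a
    show phi1Val e h (psiPt G e h he hh hne hsub g u).1 a = coneVal e h g.1 (2*(u:ℝ)) a
    rw [phi1Val_of_zero e h _ hth]
    show psiVal e h g.1 (u:ℝ) a = _
    have hcl : max (min (2*(u:ℝ)) 1) 0 = 2*(u:ℝ) := by
      rw [min_eq_left (by linarith), max_eq_left (by linarith)]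
    unfold psiVal coneVal
    rw [hcl]
    by_cases hae : a = e
    · simp only [if_pos hae]
      exact max_eq_left (by linarith)
    · simp only [if_neg hae]
      by_cases hah : a = h
      · simp only [if_pos hah]
        exact max_eq_right (by linarith)
      · simp only [if_neg hah]
        have habs : (1:ℝ)-|2*(u:ℝ)-1| = 2*(u:ℝ) := by
          rw [abs_of_nonpos (by linarith)]; ring
        rw [habs]
  rw [heq]

lemma phipsi_mid (g : realization (matchingComplex (G.deleteEdges (edgeNbhdClosed G h))))
    (u : Set.Icc (0:ℝ) 1) (hu : 1/2 < (u:ℝ)) (hu2 : (u:ℝ) ≤ 3/4) :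
    phiW G e h he hh hne hsub (psiPt G e h he hh hne hsub g u) =
      Quot.mk _ (Sum.inl (conePt G e h he hh hne hsub g (3 - 4*(u:ℝ)))) := by
  have hth : (psiPt G e h he hh hne hsub g u).1 h = 2*(u:ℝ)-1 := by
    rw [psiPt_h]; exact max_eq_left (by linarith)
  unfold phiW
  erw [if_pos (by rw [hth]; linarith)]
  have heq : phi1 G e h he hh hne hsub (psiPt G e h he hh hne hsub g u) =
      conePt G e h he hh hne hsub g (3 - 4*(u:ℝ)) := by
    apply Subtype.ext
    funext a
    show phi1Val e h (psiPt G e h he hh hne hsub g u).1 a =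
      coneVal e h g.1 (3 - 4*(u:ℝ)) a
    have hPe : (psiPt G e h he hh hne hsub g u).1 e = 0 := by
      rw [psiPt_e]; exact max_eq_right (by linarith)
    have hcl : max (min (3 - 4*(u:ℝ)) 1) 0 = 3 - 4*(u:ℝ) := by
      rw [min_eq_left (by linarith), max_eq_left (by linarith)]
    unfold phi1Val coneVal
    try dsimp only
    rw [hth, hcl, min_eq_left (by linarith : 2*(u:ℝ)-1 ≤ 1/2)]
    by_cases hah : a = h
    · simp only [if_pos hah]
      have : ¬ a = e := by rw [hah]; exact Ne.symm hne
      simp only [if_neg this]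
    · simp only [if_neg hah]
      by_cases hae : a = e
      · simp only [if_pos hae, hPe]
        rw [zero_div, mul_zero, add_zero]
        ring
      · simp only [if_neg hae]
        rw [psiPt_other G e h he hh hne hsub g u a hae hah,
          abs_of_nonneg (by linarith : (0:ℝ) ≤ 2*(u:ℝ)-1)]
        have hden : (1:ℝ)-(2*(u:ℝ)-1) ≠ 0 := by intro hc; linarith
        rw [mul_div_cancel_left₀ _ hden]
        ring
  rw [heq]

lemma phipsi_susp (g : realization (matchingComplex (G.deleteEdges (edgeNbhdClosed G h))))
    (u : Set.Icc (0:ℝ) 1) (hu : 3/4 < (u:ℝ)) (hu1 : (u:ℝ) < 1) :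
    phiW G e h he hh hne hsub (psiPt G e h he hh hne hsub g u) =
      Quot.mk _ (Sum.inr (Quot.mk _ (Sum.inl (g,
        Set.projIcc 0 1 zero_le_one (8*(u:ℝ) - 6))))) := by
  have hth : (psiPt G e h he hh hne hsub g u).1 h = 2*(u:ℝ)-1 := by
    rw [psiPt_h]; exact max_eq_left (by linarith)
  have h0 : (psiPt G e h he hh hne hsub g u).1 h ≠ 0 := by rw [hth]; intro hc; linarith
  have h1 : (psiPt G e h he hh hne hsub g u).1 h ≠ 1 := by rw [hth]; intro hc; linarith
  unfold phiW
  erw [if_neg (by rw [hth]; intro hc; linarith)]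
  rw [branch2X_val G e h he hh hne hsub _ h0 h1 (by rw [hth]; linarith)]
  rw [gPt_psiPt G e h he hh hne hsub g u (by linarith) hu1]
  rw [hth, show 4*(2*(u:ℝ)-1) - 2 = 8*(u:ℝ) - 6 from by ring]
  rfl

lemma phipsi_top (g : realization (matchingComplex (G.deleteEdges (edgeNbhdClosed G h))))
    (u : Set.Icc (0:ℝ) 1) (hu : (u:ℝ) = 1) :
    phiW G e h he hh hne hsub (psiPt G e h he hh hne hsub g u) =
      Quot.mk _ (Sum.inr (Quot.mk _ (Sum.inr true))) := by
  have hth : (psiPt G e h he hh hne hsub g u).1 h = 1 := by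
    rw [psiPt_h, hu]; norm_num
  unfold phiW
  erw [if_neg (by rw [hth]; norm_num)]
  unfold branch2X
  erw [dif_pos (by rw [hth]; norm_num : 1/2 ≤ (psiPt G e h he hh hne hsub g u).1 h),
    dif_pos hth]
  rfl

end homW2

section final
open scoped Classical
set_option linter.unusedSectionVars false
set_option maxHeartbeats 1600000
variable {V : Type*} (G : SimpleGraph V) (e h : Sym2 V)
variable (he : e ∈ G.edgeSet) (hh : h ∈ G.edgeSet) (hne : e ≠ h)
variable (hsub : edgeNbhdClosed G e ⊂ edgeNbhdClosed G h)

lemma HW_zero : ∀ w, HWfun G e h he hh hne hsub w 0 =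
    phiW G e h he hh hne hsub (psiW G e h he hh hne hsub w) := by
  intro w
  induction w using Quot.ind with
  | _ a =>
  rcases a with f₀ | σ
  · show Quot.mk _ (Sum.inl f₀) =
      phiW G e h he hh hne hsub (incl0 G h f₀)
    have hth : (incl0 G h f₀).1 h = 0 := x0_h_eq_zero f₀
    unfold phiW
    erw [if_pos (by rw [hth]; norm_num)]
    have heq : phi1 G e h he hh hne hsub (incl0 G h f₀) = f₀ :=
      Subtype.ext (phi1Val_of_zero e h f₀.1 hth)
    rw [heq]
  · induction σ using Quot.ind with
    | _ b =>
    rcases b with ⟨g, u⟩ | b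
    · show HcylW G e h he hh hne hsub ((g, u), 0) =
        phiW G e h he hh hne hsub (psiPt G e h he hh hne hsub g u)
      have h1u := u.2.2
      have hb1 : bb1 (((0:unitInterval)):ℝ) = 1/2 := by
        show bb1 0 = 1/2; unfold bb1; norm_num
      have hb2 : bb2 (((0:unitInterval)):ℝ) = 3/4 := by
        show bb2 0 = 3/4; unfold bb2; norm_num
      have hb3 : bb3 (((0:unitInterval)):ℝ) = 7/8 := by
        show bb3 0 = 7/8; unfold bb3; norm_num
      unfold HcylW
      by_cases hu12 : (u:ℝ) ≤ 1/2
      · erw [if_pos (by rw [hb1]; exact hu12)]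
        rw [phipsi_low G e h he hh hne hsub g u hu12]
      · erw [if_neg (by rw [hb1]; exact hu12)]
        by_cases hu34 : (u:ℝ) ≤ 3/4
        · erw [if_pos (by rw [hb2]; exact hu34)]
          rw [show 3*(1-(((0:unitInterval)):ℝ)) - 4*(u:ℝ) = 3 - 4*(u:ℝ) from by norm_num]
          rw [phipsi_mid G e h he hh hne hsub g u (lt_of_not_ge hu12) hu34]
        · erw [if_neg (by rw [hb2]; exact hu34)]
          by_cases hu78 : (u:ℝ) ≤ 7/8
          · erw [if_pos (by rw [hb3]; exact hu78)]
            have harg : ((u:ℝ) - bb2 (((0:unitInterval)):ℝ))/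
                (bb3 (((0:unitInterval)):ℝ) - bb2 (((0:unitInterval)):ℝ)) = 8*(u:ℝ) - 6 := by
              rw [show (((0:unitInterval)):ℝ) = 0 from rfl]
              unfold bb2 bb3
              rw [div_eq_iff (by norm_num : (7/8 + 0/8 - 3*(1-0)/4 : ℝ) ≠ 0)]
              ring
            rw [harg]
            rw [phipsi_susp G e h he hh hne hsub g u (lt_of_not_ge hu34) (by linarith)]
            rfl
          · erw [if_neg (by rw [hb3]; exact hu78)]
            by_cases hu1 : (u:ℝ) = 1
            · rw [phipsi_top G e h he hh hne hsub g u hu1]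
              rfl
            · rw [phipsi_susp G e h he hh hne hsub g u
                (by linarith [lt_of_not_ge hu78]) (lt_of_le_of_ne h1u hu1)]
              rw [susp_mk_one _ _ (by
                rw [Set.coe_projIcc,
                  min_eq_left (by linarith [lt_of_not_ge hu78] : (1:ℝ) ≤ 8*(u:ℝ)-6)]
                norm_num)]
              rfl
    · rcases b with _ | _
      · show Quot.mk _ (Sum.inl (basept0 G e h he hne)) =
          phiW G e h he hh hne hsub (deltaEX G e he)
        have hth : (deltaEX G e he).1 h = 0 := by
          simp [deltaEX, deltaPt, Ne.symm hne]
        unfold phiW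
        erw [if_pos (by rw [hth]; norm_num)]
        have heq : phi1 G e h he hh hne hsub (deltaEX G e he) = basept0 G e h he hne := by
          apply Subtype.ext
          show phi1Val e h (deltaEX G e he).1 = (basept0 G e h he hne).1
          rw [phi1Val_of_zero e h _ hth]
          funext a
          simp [deltaEX, basept0, deltaPt]
        rw [heq]
      · show Quot.mk _ (Sum.inr (Quot.mk _ (Sum.inr true))) =
          phiW G e h he hh hne hsub (deltaHX G h hh)
        have hth : (deltaHX G h hh).1 h = 1 := by
          simp [deltaHX, deltaPt]
        unfold phiW
        erw [if_neg (by rw [hth]; norm_num)]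
        unfold branch2X
        erw [dif_pos (by rw [hth]; norm_num :
            1/2 ≤ (deltaHX G h hh).1 h), dif_pos hth]
        rfl

lemma HW_one : ∀ w, HWfun G e h he hh hne hsub w 1 = w := by
  intro w
  induction w using Quot.ind with
  | _ a =>
  rcases a with f₀ | σ
  · rfl
  · induction σ using Quot.ind with
    | _ b =>
    rcases b with ⟨g, u⟩ | b
    · show HcylW G e h he hh hne hsub ((g, u), 1) =
        Quot.mk _ (Sum.inr (Quot.mk _ (Sum.inl (g, u))))
      have hb1 : bb1 (((1:unitInterval)):ℝ) = 0 := by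
        show bb1 1 = 0; unfold bb1; norm_num
      have hb2 : bb2 (((1:unitInterval)):ℝ) = 0 := by
        show bb2 1 = 0; unfold bb2; norm_num
      have hb3 : bb3 (((1:unitInterval)):ℝ) = 1 := by
        show bb3 1 = 1; unfold bb3; norm_num
      unfold HcylW
      by_cases hu0 : (u:ℝ) ≤ 0
      · have hu00 : (u:ℝ) = 0 := le_antisymm hu0 u.2.1
        erw [if_pos (by rw [hb1]; exact hu0)]
        rw [hu00, show (2:ℝ)*0 = 0 from by norm_num,
          conePt_zero G e h he hh hne hsub]
        rw [susp_mk_zero g u hu00]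
        exact wedge_glue _ _
      · erw [if_neg (by rw [hb1]; exact hu0), if_neg (by rw [hb2]; exact hu0),
          if_pos (by rw [hb3]; exact u.2.2)]
        have harg : ((u:ℝ) - bb2 (((1:unitInterval)):ℝ))/
            (bb3 (((1:unitInterval)):ℝ) - bb2 (((1:unitInterval)):ℝ)) = (u:ℝ) := by
          rw [show (((1:unitInterval)):ℝ) = 1 from rfl]
          unfold bb2 bb3
          norm_num
        rw [harg]
        have hproj : Set.projIcc (0:ℝ) 1 zero_le_one (u:ℝ) = u := by
          apply Subtype.ext
          rw [Set.coe_projIcc, min_eq_right u.2.2, max_eq_right u.2.1]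
        rw [hproj]
        rfl
    · rcases b with _ | _
      · exact wedge_glue _ _
      · rfl

def phiCM : C(realization (matchingComplex G),
    Wedge (realization (matchingComplex (G.deleteEdges {h})))
      (Susp (realization (matchingComplex (G.deleteEdges (edgeNbhdClosed G h)))))
      (basept0 G e h he hne) (baseptS G h)) :=
  ⟨phiW G e h he hh hne hsub, phiW_cont G e h he hh hne hsub⟩

def psiCM : C(Wedge (realization (matchingComplex (G.deleteEdges {h})))
      (Susp (realization (matchingComplex (G.deleteEdges (edgeNbhdClosed G h)))))
      (basept0 G e h he hne) (baseptS G h), realization (matchingComplex G)) :=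
  ⟨psiW G e h he hh hne hsub, psiW_cont G e h he hh hne hsub⟩

def homotopyX : ContinuousMap.Homotopy (ContinuousMap.id (realization (matchingComplex G)))
    ((psiCM G e h he hh hne hsub).comp (phiCM G e h he hh hne hsub)) where
  toFun := HXPt G e h he hh hne hsub
  continuous_toFun := HX_cont G e h he hh hne hsub
  map_zero_left := HX_zero G e h he hh hne hsub
  map_one_left := HX_one G e h he hh hne hsub

def homotopyW : ContinuousMap.Homotopy
    ((phiCM G e h he hh hne hsub).comp (psiCM G e h he hh hne hsub))
    (ContinuousMap.id _) where
  toContinuousMap :=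
    (ContinuousMap.uncurry ⟨HWfun G e h he hh hne hsub, HWfun_cont G e h he hh hne hsub⟩).comp
      ⟨Homeomorph.prodComm unitInterval _, (Homeomorph.prodComm unitInterval _).continuous⟩
  map_zero_left := fun w => (HW_zero G e h he hh hne hsub w).symm.symm
  map_one_left := HW_one G e h he hh hne hsub

def hequiv : ContinuousMap.HomotopyEquiv (realization (matchingComplex G))
    (Wedge (realization (matchingComplex (G.deleteEdges {h})))
      (Susp (realization (matchingComplex (G.deleteEdges (edgeNbhdClosed G h)))))
      (basept0 G e h he hne) (baseptS G h)) :=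
  ⟨phiCM G e h he hh hne hsub, psiCM G e h he hh hne hsub,
    ⟨(homotopyX G e h he hh hne hsub).symm⟩, ⟨homotopyW G e h he hh hne hsub⟩⟩

end final
end AuxWP

/-- If `EN[e] ⊊ EN[h]` for distinct edges `e, h`, then
`M(G) ≃ M(G \ {h}) ∨ Σ M(G \ EN[h])`. -/
theorem matchingComplex_homotopyEquiv_wedge_of_closedNbhd_ssubset
    {V : Type*} (G : SimpleGraph V) (e h : Sym2 V)
    (he : e ∈ G.edgeSet) (hh : h ∈ G.edgeSet) (hne : e ≠ h)
    (hsub : edgeNbhdClosed G e ⊂ edgeNbhdClosed G h) :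
    ∃ (x : realization (matchingComplex (G.deleteEdges {h})))
      (y : Susp (realization (matchingComplex (G.deleteEdges (edgeNbhdClosed G h))))),
      Nonempty (ContinuousMap.HomotopyEquiv (realization (matchingComplex G))
        (Wedge _ _ x y)) :=
  ⟨AuxWP.basept0 G e h he hne, AuxWP.baseptS G h, ⟨AuxWP.hequiv G e h he hh hne hsub⟩⟩
end
end

section
/- Let G be a graph containing two distinct edges e and h such that the open edge neighborhood EN(e) is a proper subset of EN(h). Then M(G) collapses onto M(G \ {h}); in particular M(G) is homotopy equivalent to M(G \ {h}). -/
noncomputable section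

section CollapseAux

variable {V : Type*}

open Classical in
/-- Shift the weight at `h` to `e`, by fraction `t`. -/
noncomputable def flowFun (e h : Sym2 V) (t : ℝ) (f : Sym2 V → ℝ) : Sym2 V → ℝ :=
  fun a => if a = h then (1 - t) * f h else if a = e then f e + t * f h else f a

open Classical in
lemma flowFun_apply (e h : Sym2 V) (hne : e ≠ h) (t : ℝ) (f : Sym2 V → ℝ) (a : Sym2 V) :
    flowFun e h t f a =
      f a + t * f h * ((if a = e then (1 : ℝ) else 0) - (if a = h then (1 : ℝ) else 0)) := by
  unfold flowFun
  by_cases h1 : a = h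
  · simp only [if_pos h1, if_neg (show a ≠ e from fun hae => hne (hae.symm.trans h1))]
    rw [h1]; ring
  · by_cases h2 : a = e
    · simp only [if_neg h1, if_pos h2]
      rw [h2]; ring
    · simp only [if_neg h1, if_neg h2]
      ring

lemma sum_flowFun (e h : Sym2 V) (hne : e ≠ h) (t : ℝ) (f : Sym2 V → ℝ)
    (T : Finset (Sym2 V)) (heT : e ∈ T) (hhT : h ∈ T) :
    ∑ a ∈ T, flowFun e h t f a = ∑ a ∈ T, f a := by
  classical
  simp only [flowFun_apply e h hne t f]
  rw [Finset.sum_add_distrib]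
  have hz : ∑ a ∈ T, t * f h *
      ((if a = e then (1:ℝ) else 0) - (if a = h then (1:ℝ) else 0)) = 0 := by
    rw [← Finset.mul_sum, Finset.sum_sub_distrib,
      Finset.sum_ite_eq' T e (fun _ => (1:ℝ)), Finset.sum_ite_eq' T h (fun _ => (1:ℝ))]
    simp [heT, hhT]
  rw [hz, add_zero]

lemma flowFun_of_apply_eq_zero (e h : Sym2 V) (t : ℝ) (f : Sym2 V → ℝ) (hf : f h = 0) :
    flowFun e h t f = f := by
  funext a
  unfold flowFun
  split_ifs with h1 h2
  · rw [h1, hf]; ring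
  · rw [h2, hf]; ring
  · rfl

lemma flowFun_zero (e h : Sym2 V) (f : Sym2 V → ℝ) : flowFun e h 0 f = f := by
  funext a
  unfold flowFun
  split_ifs with h1 h2
  · rw [h1]; ring
  · rw [h2]; ring
  · rfl

lemma flowFun_nonneg (e h : Sym2 V) (t : ℝ) (ht0 : 0 ≤ t) (ht1 : t ≤ 1)
    (f : Sym2 V → ℝ) (hf : ∀ a, 0 ≤ f a) (a : Sym2 V) : 0 ≤ flowFun e h t f a := by
  unfold flowFun
  split_ifs
  · exact mul_nonneg (by linarith) (hf h)
  · exact add_nonneg (hf e) (mul_nonneg ht0 (hf h))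
  · exact hf a

lemma continuous_flowFun {X : Type*} [TopologicalSpace X] {e h : Sym2 V}
    {F : X → Sym2 V → ℝ} {τ : X → ℝ} (hF : Continuous F) (hτ : Continuous τ) :
    Continuous (fun x => flowFun e h (τ x) (F x)) := by
  apply continuous_pi
  intro a
  unfold flowFun
  by_cases h1 : a = h
  · simp only [if_pos h1]
    exact (continuous_const.sub hτ).mul ((continuous_apply h).comp hF)
  · by_cases h2 : a = e
    · simp only [if_neg h1, if_pos h2]
      exact ((continuous_apply e).comp hF).add (hτ.mul ((continuous_apply h).comp hF))
    · simp only [if_neg h1, if_neg h2]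
      exact (continuous_apply a).comp hF

variable {G : SimpleGraph V} {e h : Sym2 V}

lemma disj_e_of_disj_h (hsub : edgeNbhdOpen G e ⊆ edgeNbhdOpen G h) {x : Sym2 V}
    (hx : x ∈ G.edgeSet) (hxh : x = h ∨ ∀ v, v ∈ x → v ∉ h) (hxe : x ≠ e) :
    ∀ v, v ∈ e → v ∉ x := by
  intro v hv hvx
  have hxE : x ∈ edgeNbhdOpen G e := ⟨hx, hxe, v, hv, hvx⟩
  have hxH := hsub hxE
  obtain ⟨w, hwh, hwx⟩ := hxH.2.2
  rcases hxh with rfl | hd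
  · exact hxH.2.1 rfl
  · exact hd w hwx hwh

open Classical in
lemma insert_mem_matchingComplex (he : e ∈ G.edgeSet) (hh : h ∈ G.edgeSet) (hne : e ≠ h)
    (hsub : edgeNbhdOpen G e ⊆ edgeNbhdOpen G h)
    {s : Finset (Sym2 V)} (hs : s ∈ matchingComplex G) (hhs : h ∈ s) :
    insert e s ∈ matchingComplex G := by
  classical
  obtain ⟨hedge, hdisj⟩ := hs
  have key : ∀ x ∈ s, x ≠ e → ∀ v, v ∈ e → v ∉ x := by
    intro x hxs hxe
    refine disj_e_of_disj_h hsub (hedge x hxs) ?_ hxe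
    by_cases hxh : x = h
    · exact Or.inl hxh
    · exact Or.inr fun v hvx hvh => hdisj x hxs h hhs hxh v hvx hvh
  constructor
  · intro x hx
    rcases Finset.mem_insert.mp hx with hx' | hx'
    · rw [hx']; exact he
    · exact hedge x hx'
  · intro x hx y hy hxy v hvx hvy
    rcases Finset.mem_insert.mp hx with hx' | hx'
    · rcases Finset.mem_insert.mp hy with hy' | hy'
      · exact hxy (hx'.trans hy'.symm)
      · exact key y hy' (fun hye => hxy (hx'.trans hye.symm)) v
          (by rw [← hx']; exact hvx) hvy
    · rcases Finset.mem_insert.mp hy with hy' | hy'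
      · exact key x hx' (fun hxe => hxy (hxe.trans hy'.symm)) v
          (by rw [← hy']; exact hvy) hvx
      · exact hdisj x hx' y hy' hxy v hvx hvy

lemma flow_mem_realization (he : e ∈ G.edgeSet) (hh : h ∈ G.edgeSet) (hne : e ≠ h)
    (hsub : edgeNbhdOpen G e ⊆ edgeNbhdOpen G h) {f : Sym2 V → ℝ} (t : ℝ)
    (ht0 : 0 ≤ t) (ht1 : t ≤ 1)
    (hf : (∀ a, 0 ≤ f a) ∧ ∃ s ∈ matchingComplex G,
      Function.support f ⊆ ↑s ∧ ∑ a ∈ s, f a = 1) :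
    (∀ a, 0 ≤ flowFun e h t f a) ∧ ∃ s ∈ matchingComplex G,
      Function.support (flowFun e h t f) ⊆ ↑s ∧ ∑ a ∈ s, flowFun e h t f a = 1 := by
  classical
  obtain ⟨hpos, s, hsK, hsupp, hsum⟩ := hf
  refine ⟨flowFun_nonneg e h t ht0 ht1 f hpos, ?_⟩
  by_cases hhs : h ∈ s
  · refine ⟨insert e s, insert_mem_matchingComplex he hh hne hsub hsK hhs, ?_, ?_⟩
    · intro a ha
      simp only [Function.mem_support] at ha
      unfold flowFun at ha
      by_cases h1 : a = h
      · exact Finset.mem_coe.mpr (Finset.mem_insert.mpr (Or.inr (by rw [h1]; exact hhs)))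
      · by_cases h2 : a = e
        · exact Finset.mem_coe.mpr (Finset.mem_insert.mpr (Or.inl h2))
        · rw [if_neg h1, if_neg h2] at ha
          exact Finset.mem_coe.mpr
            (Finset.mem_insert_of_mem (Finset.mem_coe.mp (hsupp ha)))
    · rw [sum_flowFun e h hne t f _ (Finset.mem_insert_self e s)
        (Finset.mem_insert_of_mem hhs)]
      have hss := Finset.sum_subset (Finset.subset_insert e s)
        (fun x _ hxs => Classical.byContradiction fun hx0 =>
          hxs (Finset.mem_coe.mp (hsupp (Function.mem_support.mpr hx0))))
      rw [← hss, hsum]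
  · have hfh : f h = 0 := by
      by_contra h0
      exact hhs (Finset.mem_coe.mp (hsupp (Function.mem_support.mpr h0)))
    rw [flowFun_of_apply_eq_zero e h t f hfh]
    exact ⟨s, hsK, hsupp, hsum⟩

lemma flow_mem_realization' (he : e ∈ G.edgeSet) (hh : h ∈ G.edgeSet) (hne : e ≠ h)
    (hsub : edgeNbhdOpen G e ⊆ edgeNbhdOpen G h) {f : Sym2 V → ℝ}
    (hf : (∀ a, 0 ≤ f a) ∧ ∃ s ∈ matchingComplex G,
      Function.support f ⊆ ↑s ∧ ∑ a ∈ s, f a = 1) :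
    (∀ a, 0 ≤ flowFun e h 1 f a) ∧ ∃ s ∈ matchingComplex (G.deleteEdges {h}),
      Function.support (flowFun e h 1 f) ⊆ ↑s ∧ ∑ a ∈ s, flowFun e h 1 f a = 1 := by
  classical
  obtain ⟨hpos, s, hsK, hsupp, hsum⟩ := hf
  refine ⟨flowFun_nonneg e h 1 zero_le_one le_rfl f hpos, ?_⟩
  have hflowh : flowFun e h 1 f h = 0 := by
    unfold flowFun
    simp
  by_cases hhs : h ∈ s
  · have hT := insert_mem_matchingComplex he hh hne hsub hsK hhs
    obtain ⟨hedge, hdisj⟩ := hT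
    refine ⟨(insert e s).erase h, ⟨?_, ?_⟩, ?_, ?_⟩
    · intro x hx
      have hx' := Finset.mem_of_mem_erase hx
      have hxh := Finset.ne_of_mem_erase hx
      rw [SimpleGraph.edgeSet_deleteEdges]
      exact ⟨hedge x hx', by simpa using hxh⟩
    · intro x hx y hy
      exact hdisj x (Finset.mem_of_mem_erase hx) y (Finset.mem_of_mem_erase hy)
    · intro a ha
      have hah : a ≠ h := by
        intro hah
        rw [Function.mem_support, hah, hflowh] at ha
        exact ha rfl
      refine Finset.mem_coe.mpr (Finset.mem_erase.mpr ⟨hah, ?_⟩)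
      simp only [Function.mem_support] at ha
      unfold flowFun at ha
      rw [if_neg hah] at ha
      by_cases h2 : a = e
      · exact Finset.mem_insert.mpr (Or.inl h2)
      · rw [if_neg h2] at ha
        exact Finset.mem_insert_of_mem (Finset.mem_coe.mp (hsupp ha))
    · rw [Finset.sum_erase _ hflowh,
        sum_flowFun e h hne 1 f _ (Finset.mem_insert_self e s)
          (Finset.mem_insert_of_mem hhs)]
      have hss := Finset.sum_subset (Finset.subset_insert e s)
        (fun x _ hxs => Classical.byContradiction fun hx0 =>
          hxs (Finset.mem_coe.mp (hsupp (Function.mem_support.mpr hx0))))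
      rw [← hss, hsum]
  · have hfh : f h = 0 := by
      by_contra h0
      exact hhs (Finset.mem_coe.mp (hsupp (Function.mem_support.mpr h0)))
    rw [flowFun_of_apply_eq_zero e h 1 f hfh]
    refine ⟨s, ⟨fun x hx => ?_, hsK.2⟩, hsupp, hsum⟩
    rw [SimpleGraph.edgeSet_deleteEdges]
    refine ⟨hsK.1 x hx, ?_⟩
    simp only [Set.mem_singleton_iff]
    rintro rfl
    exact hhs hx

lemma mem_incl {f : Sym2 V → ℝ}
    (hf : (∀ a, 0 ≤ f a) ∧ ∃ s ∈ matchingComplex (G.deleteEdges {h}),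
      Function.support f ⊆ ↑s ∧ ∑ a ∈ s, f a = 1) :
    (∀ a, 0 ≤ f a) ∧ ∃ s ∈ matchingComplex G,
      Function.support f ⊆ ↑s ∧ ∑ a ∈ s, f a = 1 := by
  obtain ⟨hpos, s, hsK, hsupp, hsum⟩ := hf
  refine ⟨hpos, s, ⟨fun x hx => ?_, hsK.2⟩, hsupp, hsum⟩
  have hx' := hsK.1 x hx
  rw [SimpleGraph.edgeSet_deleteEdges] at hx'
  exact hx'.1

lemma apply_h_eq_zero {f : Sym2 V → ℝ}
    (hf : (∀ a, 0 ≤ f a) ∧ ∃ s ∈ matchingComplex (G.deleteEdges {h}),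
      Function.support f ⊆ ↑s ∧ ∑ a ∈ s, f a = 1) : f h = 0 := by
  obtain ⟨hpos, s, hsK, hsupp, hsum⟩ := hf
  by_contra h0
  have hhs := Finset.mem_coe.mp (hsupp (Function.mem_support.mpr h0))
  have hx' := hsK.1 h hhs
  rw [SimpleGraph.edgeSet_deleteEdges] at hx'
  exact hx'.2 rfl

end CollapseAux

/-- If `EN(e) ⊊ EN(h)` for distinct edges `e, h`, then `M(G)` collapses onto, and in
particular is homotopy equivalent to, `M(G \ {h})`. -/
theorem matchingComplex_homotopyEquiv_of_openNbhd_ssubset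
    {V : Type*} (G : SimpleGraph V) (e h : Sym2 V)
    (he : e ∈ G.edgeSet) (hh : h ∈ G.edgeSet) (hne : e ≠ h)
    (hsub : edgeNbhdOpen G e ⊂ edgeNbhdOpen G h) :
    Nonempty (ContinuousMap.HomotopyEquiv (realization (matchingComplex G))
      (realization (matchingComplex (G.deleteEdges {h})))) := by
  classical
  have hsub' : edgeNbhdOpen G e ⊆ edgeNbhdOpen G h := hsub.subset
  let X := realization (matchingComplex G)
  let Y := realization (matchingComplex (G.deleteEdges {h}))
  let r : C(X, Y) :=
    ⟨fun x => ⟨flowFun e h 1 x.1, flow_mem_realization' he hh hne hsub' x.2⟩,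
      Continuous.subtype_mk (continuous_flowFun continuous_subtype_val continuous_const) _⟩
  let i : C(Y, X) := ⟨fun y => ⟨y.1, mem_incl y.2⟩,
    Continuous.subtype_mk continuous_subtype_val _⟩
  refine ⟨⟨r, i, ⟨?_⟩, ⟨?_⟩⟩⟩
  · -- left_inv : Homotopy (i.comp r) (ContinuousMap.id X)
    refine
      { toFun := fun p => ⟨flowFun e h (1 - (p.1 : ℝ)) p.2.1,
          flow_mem_realization he hh hne hsub' _
            (by linarith [unitInterval.le_one p.1]) (by linarith [unitInterval.nonneg p.1])
            p.2.2⟩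
        continuous_toFun := Continuous.subtype_mk
            (continuous_flowFun (continuous_subtype_val.comp continuous_snd)
              (continuous_const.sub (continuous_subtype_val.comp continuous_fst))) _
        map_zero_left := ?_
        map_one_left := ?_ }
    · intro x
      apply Subtype.ext
      show flowFun e h (1 - ((0 : unitInterval) : ℝ)) x.1 = flowFun e h 1 x.1
      norm_num
    · intro x
      apply Subtype.ext
      show flowFun e h (1 - ((1 : unitInterval) : ℝ)) x.1 = x.1
      norm_num [flowFun_zero]
  · -- right_inv : Homotopy (r.comp i) (ContinuousMap.id Y)
    have hcomp : r.comp i = ContinuousMap.id Y := by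
      ext y
      exact Subtype.ext (flowFun_of_apply_eq_zero e h 1 y.1 (apply_h_eq_zero y.2))
    exact (ContinuousMap.Homotopy.refl (ContinuousMap.id Y)).cast hcomp.symm rfl
end
end
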